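/- arXiv:1205.1320 — 5 statements merged into one kernel-verified Lean document; each statement's English description precedes it below -/
import Mathlib

section
/- For any two nonempty disjoint clopen sets U, W ⊆ X_A there exists α ∈ Γ_A such that α(U) ⊆ W, α² = id, and α is the identity outside U ∪ α(U). -/
open Set

instance homeoGroup {α : Type*} [TopologicalSpace α] : Group (α ≃ₜ α) where
  mul a b := b.trans a
  one := Homeomorph.refl α
  inv := Homeomorph.symm
  mul_assoc _ _ _ := Homeomorph.ext fun _ => rfl
  one_mul _ := Homeomorph.ext fun _ => rfl
  mul_one _ := Homeomorph.ext fun _ => rfl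
  inv_mul_cancel a := Homeomorph.ext fun x => a.symm_apply_apply x

@[simp] theorem homeo_mul_apply {α : Type*} [TopologicalSpace α] (a b : α ≃ₜ α) (x : α) :
    (a * b) x = a (b x) := rfl

@[simp] theorem homeo_inv_apply {α : Type*} [TopologicalSpace α] (a : α ≃ₜ α) (x : α) :
    a⁻¹ x = a.symm x := rfl

/-- The one-sided shift space `X_A` of a 0-1 matrix `A`. -/
abbrev ShiftSpace {N : ℕ} (A : Fin N → Fin N → Bool) : Type :=
  {x : ℕ → Fin N // ∀ n, A (x n) (x (n + 1)) = true}

/-- The one-sided shift `σ_A`. -/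
def shiftMap {N : ℕ} (A : Fin N → Fin N → Bool) (x : ShiftSpace A) : ShiftSpace A :=
  ⟨fun n => x.1 (n + 1), fun n => x.2 (n + 1)⟩

/-- Irreducibility of the matrix `A`: any two indices are connected by a path. -/
def MatrixIrreducible {N : ℕ} (A : Fin N → Fin N → Bool) : Prop :=
  ∀ i j : Fin N, ∃ n : ℕ, 0 < n ∧ ∃ w : ℕ → Fin N, w 0 = i ∧ w n = j ∧
    ∀ k < n, A (w k) (w (k + 1)) = true

/-- Condition (I): the shift space is homeomorphic to the Cantor set. -/
def ConditionI {N : ℕ} (A : Fin N → Fin N → Bool) : Prop :=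
  Nonempty (ShiftSpace A ≃ₜ (ℕ → Bool))

/-- The continuous full group `Γ_A`. -/
def fullGroup {N : ℕ} (A : Fin N → Fin N → Bool) :
    Subgroup (ShiftSpace A ≃ₜ ShiftSpace A) where
  carrier := {τ | ∃ k l : ShiftSpace A → ℕ, Continuous k ∧ Continuous l ∧
    ∀ x, (shiftMap A)^[k x] (τ x) = (shiftMap A)^[l x] x}
  one_mem' := ⟨fun _ => 0, fun _ => 0, continuous_const, continuous_const, fun _ => rfl⟩
  mul_mem' := by
    rintro a b ⟨k1, l1, hk1, hl1, h1⟩ ⟨k2, l2, hk2, hl2, h2⟩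
    refine ⟨fun x => k2 x + k1 (b x), fun x => l1 (b x) + l2 x,
      hk2.add (hk1.comp b.continuous), (hl1.comp b.continuous).add hl2, fun x => ?_⟩
    calc (shiftMap A)^[k2 x + k1 (b x)] ((a * b) x)
        = (shiftMap A)^[k2 x] ((shiftMap A)^[k1 (b x)] (a (b x))) :=
          Function.iterate_add_apply _ _ _ _
      _ = (shiftMap A)^[k2 x] ((shiftMap A)^[l1 (b x)] (b x)) := by rw [h1]
      _ = (shiftMap A)^[l1 (b x)] ((shiftMap A)^[k2 x] (b x)) := by
          rw [← Function.iterate_add_apply, Nat.add_comm, Function.iterate_add_apply]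
      _ = (shiftMap A)^[l1 (b x)] ((shiftMap A)^[l2 x] x) := by rw [h2]
      _ = (shiftMap A)^[l1 (b x) + l2 x] x := (Function.iterate_add_apply _ _ _ _).symm
  inv_mem' := by
    rintro a ⟨k, l, hk, hl, h⟩
    refine ⟨fun x => l (a⁻¹ x), fun x => k (a⁻¹ x),
      hl.comp a.symm.continuous, hk.comp a.symm.continuous, fun x => ?_⟩
    have := (h (a⁻¹ x)).symm
    rwa [show a (a⁻¹ x) = x from a.apply_symm_apply x] at this

/-- The local subgroup `Γ_O` of `Γ_A` associated to a set `O`. -/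
def localGroup {N : ℕ} (A : Fin N → Fin N → Bool) (O : Set (ShiftSpace A)) :
    Subgroup (ShiftSpace A ≃ₜ ShiftSpace A) where
  carrier := {γ | γ ∈ fullGroup A ∧ ∀ x ∉ O, γ x = x}
  one_mem' := ⟨(fullGroup A).one_mem, fun _ _ => rfl⟩
  mul_mem' := by
    rintro a b ⟨haΓ, ha⟩ ⟨hbΓ, hb⟩
    exact ⟨mul_mem haΓ hbΓ, fun x hx => by
      show a (b x) = x
      rw [hb x hx, ha x hx]⟩
  inv_mem' := by
    rintro a ⟨haΓ, ha⟩
    refine ⟨inv_mem haΓ, fun x hx => ?_⟩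
    conv_lhs => rw [← ha x hx]
    exact a.symm_apply_apply x

/-- The commutant in `Γ_A` of a set of homeomorphisms. -/
def commutant {N : ℕ} (A : Fin N → Fin N → Bool)
    (S : Set (ShiftSpace A ≃ₜ ShiftSpace A)) : Set (ShiftSpace A ≃ₜ ShiftSpace A) :=
  {ξ | ξ ∈ fullGroup A ∧ ∀ γ ∈ S, ξ * γ = γ * ξ}

/-- The support `P_γ` of a homeomorphism `γ`. -/
def suppHomeo {N : ℕ} {A : Fin N → Fin N → Bool} (γ : ShiftSpace A ≃ₜ ShiftSpace A) :
    Set (ShiftSpace A) :=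
  closure {x | γ x ≠ x}

/-- The support `P_H` of a set of homeomorphisms. -/
def suppSet {N : ℕ} {A : Fin N → Fin N → Bool} (H : Set (ShiftSpace A ≃ₜ ShiftSpace A)) :
    Set (ShiftSpace A) :=
  closure (⋃ η ∈ H, interior (suppHomeo η))


variable {N : ℕ} {A : Fin N → Fin N → Bool}

instance shiftCompact : CompactSpace (ShiftSpace A) := by
  have hcl : IsClosed {x : ℕ → Fin N | ∀ n, A (x n) (x (n + 1)) = true} := by
    have he : {x : ℕ → Fin N | ∀ n, A (x n) (x (n + 1)) = true} =
        ⋂ n, {x : ℕ → Fin N | A (x n) (x (n + 1)) = true} := by ext x; simp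
    rw [he]
    refine isClosed_iInter fun n => ?_
    have hc : Continuous fun x : ℕ → Fin N => A (x n) (x (n + 1)) := by
      have : Continuous fun x : ℕ → Fin N => (x n, x (n+1)) :=
        (continuous_apply n).prodMk (continuous_apply (n+1))
      exact (continuous_of_discreteTopology (f := fun p : Fin N × Fin N => A p.1 p.2)).comp this
    exact (isClosed_discrete {true}).preimage hc
  exact isCompact_iff_compactSpace.mp hcl.isCompact

lemma cylClopen (x : ShiftSpace A) (n : ℕ) :
    IsClopen {y : ShiftSpace A | ∀ i < n, y.1 i = x.1 i} := by
  have he : {y : ShiftSpace A | ∀ i < n, y.1 i = x.1 i} =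
      ⋂ i ∈ Finset.range n, {y : ShiftSpace A | y.1 i = x.1 i} := by
    ext y; simp
  rw [he]
  refine isClopen_biInter_finset fun i _ => ?_
  have hc : Continuous fun y : ShiftSpace A => y.1 i :=
    (continuous_apply i).comp continuous_subtype_val
  exact ⟨(isClosed_discrete {x.1 i}).preimage hc, (isOpen_discrete {x.1 i}).preimage hc⟩

lemma nbhd_basis {V : Set (ShiftSpace A)} (hV : IsOpen V) {x : ShiftSpace A} (hx : x ∈ V) :
    ∃ n, ∀ y : ShiftSpace A, (∀ i < n, y.1 i = x.1 i) → y ∈ V := by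
  obtain ⟨V', hV', rfl⟩ := isOpen_induced_iff.mp hV
  obtain ⟨I, u, hu, hsub⟩ := isOpen_pi_iff.mp hV' x.1 hx
  refine ⟨I.sup id + 1, fun y hy => ?_⟩
  refine hsub fun i hi => ?_
  rw [hy i (Nat.lt_succ_of_le (Finset.le_sup (f := id) hi))]
  exact (hu i hi).2

lemma determined {U : Set (ShiftSpace A)} (hU : IsClopen U) :
    ∃ n, ∀ x ∈ U, ∀ y : ShiftSpace A, (∀ i < n, y.1 i = x.1 i) → y ∈ U := by
  choose! nf hnf using fun x (hx : x ∈ U) => nbhd_basis hU.2 hx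
  have hcover : U ⊆ ⋃ x : U, {y : ShiftSpace A | ∀ i < nf x, y.1 i = x.1.1 i} := by
    intro x hx
    exact mem_iUnion.mpr ⟨⟨x, hx⟩, fun i _ => rfl⟩
  obtain ⟨t, ht⟩ := (hU.1.isCompact).elim_finite_subcover _
    (fun x : U => (cylClopen x.1 (nf x)).2) hcover
  refine ⟨t.sup (fun x => nf x.1), fun x hx y hy => ?_⟩
  have := ht hx
  simp only [Set.mem_iUnion] at this
  obtain ⟨z, hzt, hz⟩ := this
  refine hnf z.1 z.2 y fun i hi => ?_
  have hle : nf z.1 ≤ t.sup (fun x => nf x.1) := Finset.le_sup (f := fun x => nf x.1) hzt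
  rw [hy i (lt_of_lt_of_le hi hle)]
  exact hz i hi

lemma cantor_open_infinite {V : Set (ℕ → Bool)} (hV : IsOpen V) (hne : V.Nonempty) :
    V.Infinite := by
  obtain ⟨f, hf⟩ := hne
  obtain ⟨I, u, hu, hsub⟩ := isOpen_pi_iff.mp hV f hf
  set B := I.sup id + 1 with hB
  have hmem : ∀ k : ℕ, Function.update f (B + k) (!f (B + k)) ∈ V := by
    intro k
    refine hsub fun i hi => ?_
    have hne' : B + k ≠ i := by
      have : i < B := Nat.lt_succ_of_le (Finset.le_sup (f := id) hi)
      omega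
    rw [Function.update_of_ne (Ne.symm hne')]
    exact (hu i hi).2
  refine Set.infinite_of_injective_forall_mem (f := fun k => Function.update f (B + k) (!f (B + k)))
    (fun k k' hkk => ?_) hmem
  by_contra hne'
  have h1 := congrFun hkk (B + k)
  simp only at h1
  rw [Function.update_self, Function.update_of_ne (by omega)] at h1
  exact (Bool.not_ne_self _) h1

lemma shift_iter (k : ℕ) (x : ShiftSpace A) (j : ℕ) :
    ((shiftMap A)^[k] x).1 j = x.1 (j + k) := by
  induction k generalizing x j with
  | zero => rfl
  | succ k ih =>
      rw [Function.iterate_succ_apply, ih]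
      rfl

lemma prefClopen (c : ℕ → Fin N) (n : ℕ) :
    IsClopen {y : ShiftSpace A | ∀ i ≤ n, y.1 i = c i} := by
  have he : {y : ShiftSpace A | ∀ i ≤ n, y.1 i = c i} =
      ⋂ i ∈ Finset.range (n+1), {y : ShiftSpace A | y.1 i = c i} := by
    ext y; simp [Nat.lt_succ_iff]
  rw [he]
  refine isClopen_biInter_finset fun i _ => ?_
  have hc : Continuous fun y : ShiftSpace A => y.1 i :=
    (continuous_apply i).comp continuous_subtype_val
  exact ⟨(isClosed_discrete {c i}).preimage hc, (isOpen_discrete {c i}).preimage hc⟩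

/-- replace the length-`mi+1` prefix of `x` shifted to position `n`. -/
def swapSeq {N : ℕ} {A : Fin N → Fin N → Bool} (c : ℕ → Fin N) (mi n : ℕ)
    (x : ShiftSpace A) : ℕ → Fin N :=
  fun j => if j ≤ mi then c j else x.1 (j - mi + n)

lemma swapSeq_adm (c d : ℕ → Fin N) (mi n : ℕ) (x : ShiftSpace A)
    (hc : ∀ j < mi, A (c j) (c (j+1)) = true)
    (hcd : c mi = d n) (hx : x.1 n = d n) :
    ∀ j, A (swapSeq c mi n x j) (swapSeq c mi n x (j+1)) = true := by
  intro j
  rcases lt_trichotomy (j+1) (mi + 1) with h1 | h1 | h1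
  · have h2 : j + 1 ≤ mi := by omega
    have h3 : j ≤ mi := by omega
    simp only [swapSeq, if_pos h2, if_pos h3]
    exact hc j (by omega)
  · have h2 : j = mi := by omega
    subst h2
    have h3 : ¬ (j + 1 ≤ j) := by omega
    simp only [swapSeq, if_pos (le_refl j), if_neg h3]
    have h4 : j + 1 - j + n = n + 1 := by omega
    rw [h4, hcd, ← hx]
    exact x.2 n
  · have h2 : ¬ (j + 1 ≤ mi) := by omega
    have h3 : ¬ (j ≤ mi) := by omega
    simp only [swapSeq, if_neg h2, if_neg h3]
    have h4 : j + 1 - mi + n = (j - mi + n) + 1 := by omega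
    rw [h4]
    exact x.2 _

lemma swapSeq_cont (c : ℕ → Fin N) (mi n : ℕ) :
    Continuous fun x : ShiftSpace A => swapSeq c mi n x := by
  refine continuous_pi fun j => ?_
  by_cases hj : j ≤ mi
  · simp only [swapSeq, if_pos hj]; exact continuous_const
  · simp only [swapSeq, if_neg hj]
    exact (continuous_apply _).comp continuous_subtype_val

lemma swap_construction (ι : Type) [Finite ι]
    (n : ℕ) (m : ι → ℕ) (p q : ι → ℕ → Fin N)
    (hp : ∀ i, ∀ j < n, A (p i j) (p i (j+1)) = true)
    (hq : ∀ i, ∀ j < m i, A (q i j) (q i (j+1)) = true)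
    (hend : ∀ i, q i (m i) = p i n)
    (Z Y : ι → Set (ShiftSpace A))
    (hZ : ∀ i, Z i = {x : ShiftSpace A | ∀ j ≤ n, x.1 j = p i j})
    (hY : ∀ i, Y i = {x : ShiftSpace A | ∀ j ≤ m i, x.1 j = q i j})
    (hZZ : ∀ i i', i ≠ i' → Disjoint (Z i) (Z i'))
    (hYY : ∀ i i', i ≠ i' → Disjoint (Y i) (Y i'))
    (hZY : ∀ i i', Disjoint (Z i) (Y i')) :
    ∃ α : ShiftSpace A ≃ₜ ShiftSpace A,
      (∃ k l : ShiftSpace A → ℕ, Continuous k ∧ Continuous l ∧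
        ∀ x, (shiftMap A)^[k x] (α x) = (shiftMap A)^[l x] x) ∧
      (∀ i, ∀ x ∈ Z i, α x ∈ Y i) ∧ (∀ i, ∀ y ∈ Y i, α y ∈ Z i) ∧
      (∀ x, α (α x) = x) ∧
      (∀ x, (∀ i, x ∉ Z i) → (∀ i, x ∉ Y i) → α x = x) := by
  classical
  have memZ : ∀ i (x : ShiftSpace A), x ∈ Z i → x.1 n = p i n := by
    intro i x hx; rw [hZ i] at hx; exact hx n le_rfl
  have memY : ∀ i (y : ShiftSpace A), y ∈ Y i → y.1 (m i) = q i (m i) := by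
    intro i y hy; rw [hY i] at hy; exact hy (m i) le_rfl
  have hend' : ∀ i, p i n = q i (m i) := fun i => (hend i).symm
  set f : ShiftSpace A → ShiftSpace A := fun x =>
    if h : ∃ i, x ∈ Z i then
      ⟨swapSeq (q h.choose) (m h.choose) n x,
        swapSeq_adm _ (p h.choose) _ _ x (hq h.choose) (hend h.choose)
          (memZ _ _ h.choose_spec)⟩
    else if h' : ∃ i, x ∈ Y i then
      ⟨swapSeq (p h'.choose) n (m h'.choose) x,
        swapSeq_adm _ (q h'.choose) _ _ x (hp h'.choose) (hend' h'.choose)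
          (memY _ _ h'.choose_spec)⟩
    else x with hf
  have uniqZ : ∀ (i : ι) (x : ShiftSpace A), x ∈ Z i → ∀ (i' : ι), x ∈ Z i' → i' = i := by
    intro i x hx i' hx'
    by_contra hne
    exact (hZZ i' i hne).ne_of_mem hx' hx rfl
  have uniqY : ∀ (i : ι) (x : ShiftSpace A), x ∈ Y i → ∀ (i' : ι), x ∈ Y i' → i' = i := by
    intro i x hx i' hx'
    by_contra hne
    exact (hYY i' i hne).ne_of_mem hx' hx rfl
  have hfZval : ∀ i, ∀ x ∈ Z i, (f x).1 = swapSeq (q i) (m i) n x := by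
    intro i x hx
    have hex : ∃ i', x ∈ Z i' := ⟨i, hx⟩
    rw [hf]
    simp only [dif_pos hex]
    rw [uniqZ i x hx hex.choose hex.choose_spec]
  have hfYval : ∀ i, ∀ y ∈ Y i, (f y).1 = swapSeq (p i) n (m i) y := by
    intro i y hy
    have hnex : ¬ ∃ i', y ∈ Z i' := by
      rintro ⟨i', hy'⟩
      exact (hZY i' i).ne_of_mem hy' hy rfl
    have hex : ∃ i', y ∈ Y i' := ⟨i, hy⟩
    rw [hf]
    simp only [dif_neg hnex, dif_pos hex]
    rw [uniqY i y hy hex.choose hex.choose_spec]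
  have hfid : ∀ x, (∀ i, x ∉ Z i) → (∀ i, x ∉ Y i) → f x = x := by
    intro x h1 h2
    rw [hf]
    simp only [dif_neg (not_exists.mpr h1), dif_neg (not_exists.mpr h2)]
  have hfZY : ∀ i, ∀ x ∈ Z i, f x ∈ Y i := by
    intro i x hx
    rw [hY i]
    intro j hj
    rw [hfZval i x hx]
    simp only [swapSeq, if_pos hj]
  have hfYZ : ∀ i, ∀ y ∈ Y i, f y ∈ Z i := by
    intro i y hy
    rw [hZ i]
    intro j hj
    rw [hfYval i y hy]
    simp only [swapSeq, if_pos hj]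
  have hinvol : ∀ x, f (f x) = x := by
    intro x
    by_cases h : ∃ i, x ∈ Z i
    · obtain ⟨i, hx⟩ := h
      have h1 : f x ∈ Y i := hfZY i x hx
      apply Subtype.ext
      rw [hfYval i (f x) h1]
      funext j
      rcases le_or_gt j n with hj | hj
      · simp only [swapSeq, if_pos hj]
        rw [hZ i] at hx
        exact (hx j hj).symm
      · have h2 : ¬ (j ≤ n) := by omega
        simp only [swapSeq, if_neg h2]
        rw [hfZval i x hx]
        have h3 : ¬ (j - n + m i ≤ m i) := by omega
        simp only [swapSeq, if_neg h3]
        have h5 : j - n + m i - m i + n = j := by omega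
        rw [h5]
    · by_cases h' : ∃ i, x ∈ Y i
      · obtain ⟨i, hx⟩ := h'
        have h1 : f x ∈ Z i := hfYZ i x hx
        apply Subtype.ext
        rw [hfZval i (f x) h1]
        funext j
        rcases le_or_gt j (m i) with hj | hj
        · simp only [swapSeq, if_pos hj]
          rw [hY i] at hx
          exact (hx j hj).symm
        · have h2 : ¬ (j ≤ m i) := by omega
          simp only [swapSeq, if_neg h2]
          rw [hfYval i x hx]
          have h3 : ¬ (j - m i + n ≤ n) := by omega
          simp only [swapSeq, if_neg h3]
          have h5 : j - m i + n - n + m i = j := by omega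
          rw [h5]
      · have hx : f x = x := hfid x (not_exists.mp h) (not_exists.mp h')
        rw [hx, hx]
  have hZclopen : ∀ i, IsClopen (Z i) := fun i => (hZ i) ▸ prefClopen (p i) n
  have hYclopen : ∀ i, IsClopen (Y i) := fun i => (hY i) ▸ prefClopen (q i) (m i)
  have hZUclosed : IsClosed (⋃ i, Z i) := isClosed_iUnion_of_finite fun i => (hZclopen i).1
  have hRopen : IsOpen ((⋃ i, Z i) ∪ ⋃ i, Y i)ᶜ :=
    (hZUclosed.union (isClosed_iUnion_of_finite fun i => (hYclopen i).1)).isOpen_compl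
  have hYopen' : ∀ i, IsOpen (Y i ∩ (⋃ i', Z i')ᶜ) := fun i =>
    (hYclopen i).2.inter hZUclosed.isOpen_compl
  have hmemR : ∀ x : ShiftSpace A, (∀ i, x ∉ Z i) → (∀ i, x ∉ Y i) →
      x ∈ ((⋃ i, Z i) ∪ ⋃ i, Y i)ᶜ := by
    intro x h1 h2
    simp only [mem_compl_iff, mem_union, mem_iUnion]
    push_neg
    exact ⟨h1, h2⟩
  have hFcont : Continuous fun x => (f x).1 := by
    rw [continuous_iff_continuousAt]
    intro x
    by_cases h : ∃ i, x ∈ Z i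
    · obtain ⟨i, hx⟩ := h
      refine ContinuousAt.congr (swapSeq_cont (q i) (m i) n).continuousAt ?_
      filter_upwards [(hZclopen i).2.mem_nhds hx] with z hz
      exact (hfZval i z hz).symm
    · by_cases h' : ∃ i, x ∈ Y i
      · obtain ⟨i, hx⟩ := h'
        refine ContinuousAt.congr (swapSeq_cont (p i) n (m i)).continuousAt ?_
        filter_upwards [(hYopen' i).mem_nhds ⟨hx, by simpa using not_exists.mp h⟩] with z hz
        exact (hfYval i z hz.1).symm
      · refine ContinuousAt.congr continuous_subtype_val.continuousAt ?_
        filter_upwards [hRopen.mem_nhds (hmemR x (not_exists.mp h) (not_exists.mp h'))] with z hz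
        simp only [mem_compl_iff, mem_union, mem_iUnion] at hz
        push_neg at hz
        exact congrArg _ (hfid z hz.1 hz.2).symm
  have hfcont : Continuous f := hFcont.subtype_mk _
  set α : ShiftSpace A ≃ₜ ShiftSpace A :=
    ⟨⟨f, f, hinvol, hinvol⟩, hfcont, hfcont⟩ with hα
  have hαf : ∀ x, α x = f x := fun _ => rfl
  -- cocycle functions
  set k : ShiftSpace A → ℕ := fun x =>
    if h : ∃ i, x ∈ Z i then m h.choose else if _h' : ∃ i, x ∈ Y i then n else 0 with hk
  set l : ShiftSpace A → ℕ := fun x =>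
    if _h : ∃ i, x ∈ Z i then n else if h' : ∃ i, x ∈ Y i then m h'.choose else 0 with hl
  have hkZ : ∀ i, ∀ x ∈ Z i, k x = m i := by
    intro i x hx
    have hex : ∃ i', x ∈ Z i' := ⟨i, hx⟩
    rw [hk]; simp only [dif_pos hex]
    rw [uniqZ i x hx hex.choose hex.choose_spec]
  have hkY : ∀ i, ∀ y ∈ Y i, k y = n := by
    intro i y hy
    have hnex : ¬ ∃ i', y ∈ Z i' := by
      rintro ⟨i', hy'⟩
      exact (hZY i' i).ne_of_mem hy' hy rfl
    have hex : ∃ i', y ∈ Y i' := ⟨i, hy⟩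
    rw [hk]; simp only [dif_neg hnex, dif_pos hex]
  have hlZ : ∀ i, ∀ x ∈ Z i, l x = n := by
    intro i x hx
    have hex : ∃ i', x ∈ Z i' := ⟨i, hx⟩
    rw [hl]; simp only [dif_pos hex]
  have hlY : ∀ i, ∀ y ∈ Y i, l y = m i := by
    intro i y hy
    have hnex : ¬ ∃ i', y ∈ Z i' := by
      rintro ⟨i', hy'⟩
      exact (hZY i' i).ne_of_mem hy' hy rfl
    have hex : ∃ i', y ∈ Y i' := ⟨i, hy⟩
    rw [hl]; simp only [dif_neg hnex, dif_pos hex]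
    rw [uniqY i y hy hex.choose hex.choose_spec]
  have hkid : ∀ x : ShiftSpace A, (∀ i, x ∉ Z i) → (∀ i, x ∉ Y i) → k x = 0 ∧ l x = 0 := by
    intro x h1 h2
    rw [hk, hl]
    simp only [dif_neg (not_exists.mpr h1), dif_neg (not_exists.mpr h2)]
    trivial
  have hcont_of : ∀ g : ShiftSpace A → ℕ,
      (∀ i, ∀ x ∈ Z i, ∀ z ∈ Z i, g z = g x) →
      (∀ i, ∀ x ∈ Y i, ∀ z ∈ Y i, g z = g x) →
      (∀ x, (∀ i, x ∉ Z i) → (∀ i, x ∉ Y i) →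
        ∀ z, (∀ i, z ∉ Z i) → (∀ i, z ∉ Y i) → g z = g x) →
      Continuous g := by
    intro g hgZ hgY hgR
    rw [continuous_iff_continuousAt]
    intro x
    by_cases h : ∃ i, x ∈ Z i
    · obtain ⟨i, hx⟩ := h
      refine ContinuousAt.congr (continuousAt_const (y := g x)) ?_
      filter_upwards [(hZclopen i).2.mem_nhds hx] with z hz
      exact (hgZ i x hx z hz).symm
    · by_cases h' : ∃ i, x ∈ Y i
      · obtain ⟨i, hx⟩ := h'
        refine ContinuousAt.congr (continuousAt_const (y := g x)) ?_
        filter_upwards [(hYclopen i).2.mem_nhds hx] with z hz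
        exact (hgY i x hx z hz).symm
      · refine ContinuousAt.congr (continuousAt_const (y := g x)) ?_
        filter_upwards [hRopen.mem_nhds (hmemR x (not_exists.mp h) (not_exists.mp h'))] with z hz
        simp only [mem_compl_iff, mem_union, mem_iUnion] at hz
        push_neg at hz
        exact (hgR x (not_exists.mp h) (not_exists.mp h') z hz.1 hz.2).symm
  have hkcont : Continuous k := by
    refine hcont_of k ?_ ?_ ?_
    · intro i x hx z hz; rw [hkZ i z hz, hkZ i x hx]
    · intro i x hx z hz; rw [hkY i z hz, hkY i x hx]
    · intro x h1 h2 z h3 h4; rw [(hkid z h3 h4).1, (hkid x h1 h2).1]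
  have hlcont : Continuous l := by
    refine hcont_of l ?_ ?_ ?_
    · intro i x hx z hz; rw [hlZ i z hz, hlZ i x hx]
    · intro i x hx z hz; rw [hlY i z hz, hlY i x hx]
    · intro x h1 h2 z h3 h4; rw [(hkid z h3 h4).2, (hkid x h1 h2).2]
  have hcoc : ∀ x, (shiftMap A)^[k x] (α x) = (shiftMap A)^[l x] x := by
    intro x
    by_cases h : ∃ i, x ∈ Z i
    · obtain ⟨i, hx⟩ := h
      rw [hkZ i x hx, hlZ i x hx]
      apply Subtype.ext
      funext j
      rw [shift_iter, shift_iter, hαf, hfZval i x hx]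
      rcases Nat.eq_zero_or_pos j with hj | hj
      · subst hj
        simp only [swapSeq, Nat.zero_add, if_pos (le_refl (m i)), hend i]
        exact (memZ i x hx).symm
      · have h2 : ¬ (j + m i ≤ m i) := by omega
        simp only [swapSeq, if_neg h2]
        have h3 : j + m i - m i + n = j + n := by omega
        rw [h3]
    · by_cases h' : ∃ i, x ∈ Y i
      · obtain ⟨i, hx⟩ := h'
        rw [hkY i x hx, hlY i x hx]
        apply Subtype.ext
        funext j
        rw [shift_iter, shift_iter, hαf, hfYval i x hx]
        rcases Nat.eq_zero_or_pos j with hj | hj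
        · subst hj
          simp only [swapSeq, Nat.zero_add, if_pos (le_refl n), hend' i]
          exact (memY i x hx).symm
        · have h2 : ¬ (j + n ≤ n) := by omega
          simp only [swapSeq, if_neg h2]
          have h3 : j + n - n + m i = j + m i := by omega
          rw [h3]
      · have h1 := hfid x (not_exists.mp h) (not_exists.mp h')
        obtain ⟨hk0, hl0⟩ := hkid x (not_exists.mp h) (not_exists.mp h')
        rw [hk0, hl0]
        simp only [Function.iterate_zero, id]
        rw [hαf, h1]
  exact ⟨α, ⟨k, l, hkcont, hlcont, hcoc⟩,
    fun i x hx => by rw [hαf]; exact hfZY i x hx,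
    fun i y hy => by rw [hαf]; exact hfYZ i y hy,
    fun x => by rw [hαf, hαf]; exact hinvol x,
    fun x h1 h2 => by rw [hαf]; exact hfid x h1 h2⟩


theorem stmt10 {N : ℕ} (hN : 1 < N) (A : Fin N → Fin N → Bool)
    (hA : MatrixIrreducible A) (hI : ConditionI A)
    (U W : Set (ShiftSpace A)) (hU : IsClopen U) (hW : IsClopen W)
    (hUne : U.Nonempty) (hWne : W.Nonempty) (hdisj : Disjoint U W) :
    ∃ α ∈ fullGroup A, α '' U ⊆ W ∧ α * α = 1 ∧ ∀ x ∉ U ∪ α '' U, α x = x := by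
  classical
  obtain ⟨n₀, hdet0⟩ := determined hU
  obtain ⟨n₁, hdet1⟩ := determined hW
  set n := max n₀ n₁ with hn
  -- the index type of length-(n+1) prefixes of points of U
  set t : ShiftSpace A → (Fin (n+1) → Fin N) := fun x j => x.1 j with ht
  set ι := {v : Fin (n+1) → Fin N // ∃ x, x ∈ U ∧ t x = v} with hι
  haveI : Finite ι := Subtype.finite
  haveI := Fintype.ofFinite ι
  set wit : ι → ShiftSpace A := fun i => i.2.choose with hwit
  have hwitU : ∀ i : ι, wit i ∈ U := fun i => i.2.choose_spec.1
  have hwitt : ∀ i : ι, t (wit i) = i.1 := fun i => i.2.choose_spec.2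
  set p : ι → ℕ → Fin N := fun i => (wit i).1 with hpdef
  set Z : ι → Set (ShiftSpace A) :=
    fun i => {x : ShiftSpace A | ∀ j ≤ n, x.1 j = p i j} with hZdef
  have hZsubU : ∀ i, Z i ⊆ U := by
    intro i x hx
    refine hdet0 (wit i) (hwitU i) x fun j hj => ?_
    exact hx j (by omega)
  have hUsub : U ⊆ ⋃ i, Z i := by
    intro x hx
    refine mem_iUnion.mpr ⟨⟨t x, x, hx, rfl⟩, fun j hj => ?_⟩
    have := congrFun (hwitt ⟨t x, x, hx, rfl⟩) ⟨j, by omega⟩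
    simp only [ht] at this ⊢
    exact this.symm
  have hZZ : ∀ i i' : ι, i ≠ i' → Disjoint (Z i) (Z i') := by
    intro i i' hne
    rw [Set.disjoint_left]
    intro x hx hx'
    refine hne (Subtype.ext (funext fun j => ?_))
    rw [← hwitt i, ← hwitt i']
    have h1 := hx j.1 (by omega)
    have h2 := hx' j.1 (by omega)
    simp only [ht]
    exact h1.symm.trans h2
  -- the target cylinder inside W
  obtain ⟨w, hw⟩ := hWne
  set C : Set (ShiftSpace A) := {y : ShiftSpace A | ∀ j < n, y.1 j = w.1 j} with hC
  have hCW : C ⊆ W := fun y hy => hdet1 w hw y fun j hj => hy j (by omega)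
  have hCinf : C.Infinite := by
    obtain ⟨h⟩ := hI
    have h1 : IsOpen (h '' C) := h.isOpenMap _ (cylClopen w n).2
    have h2 : (h '' C).Nonempty := ⟨h w, mem_image_of_mem h (fun j _ => rfl)⟩
    exact Set.Infinite.of_image h (cantor_open_infinite h1 h2)
  -- choose distinct points of C indexed by ι
  obtain ⟨K, ⟨e⟩⟩ := Finite.exists_equiv_fin ι
  set emb : ℕ ↪ ↥C := Set.Infinite.natEmbedding C hCinf with hemb
  set y : ι → ShiftSpace A := fun i => (emb (e i : ℕ)).1 with hy
  have hyC : ∀ i, y i ∈ C := fun i => (emb (e i : ℕ)).2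
  have hyinj : Function.Injective y := by
    intro i i' hii
    have h1 : ((e i : ℕ)) = ((e i' : ℕ)) := emb.injective (Subtype.ext hii)
    exact e.injective (Fin.val_injective h1)
  -- a separating length L
  set D : ι × ι → ℕ := fun pr =>
    if h : (y pr.1).1 ≠ (y pr.2).1 then Nat.find (Function.ne_iff.mp h) + 1 else 0 with hD
  set L : ℕ := (n+1) ⊔ Finset.univ.sup D with hL
  have hL1 : n + 1 ≤ L := le_max_left _ _
  have hsep : ∀ i i' : ι, i ≠ i' → ∃ j < L, (y i).1 j ≠ (y i').1 j := by
    intro i i' hne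
    have hne' : (y i).1 ≠ (y i').1 := fun hc => hne (hyinj (Subtype.ext hc))
    refine ⟨Nat.find (Function.ne_iff.mp hne'), ?_, Nat.find_spec (Function.ne_iff.mp hne')⟩
    have h1 : D (i, i') ≤ Finset.univ.sup D := Finset.le_sup (Finset.mem_univ _)
    have h2 : D (i, i') = Nat.find (Function.ne_iff.mp hne') + 1 := by
      rw [hD]; simp only [dif_pos hne']
    have h3 : Finset.univ.sup D ≤ L := le_max_right _ _
    omega
  -- connecting paths
  have hpath : ∀ i : ι, ∃ c : ℕ, 0 < c ∧ ∃ v : ℕ → Fin N, v 0 = (y i).1 (L-1) ∧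
      v c = p i n ∧ ∀ k < c, A (v k) (v (k + 1)) = true :=
    fun i => hA ((y i).1 (L-1)) (p i n)
  choose c hcpos v hv0 hvc hvadm using hpath
  set m : ι → ℕ := fun i => L - 1 + c i with hm
  have hmdef : ∀ i, m i = L - 1 + c i := fun _ => rfl
  have hmL : ∀ i, L ≤ m i + 1 := by
    intro i; have := hcpos i; have := hL1; have := hmdef i; omega
  have hnm : ∀ i, n ≤ m i := by
    intro i; have := hcpos i; have := hL1; have := hmdef i; omega
  set q : ι → ℕ → Fin N :=
    fun i j => if j < L then (y i).1 j else v i (j - (L-1)) with hqdef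
  have hq : ∀ i, ∀ j < m i, A (q i j) (q i (j+1)) = true := by
    intro i j hj
    have hmi := hmdef i
    have hL1' := hL1
    have hci := hcpos i
    rcases lt_trichotomy (j+1) L with h1 | h1 | h1
    · have h2 : j < L := by omega
      simp only [hqdef, if_pos h1, if_pos h2]
      exact (y i).2 j
    · have h2 : j < L := by omega
      have h3 : ¬ (j + 1 < L) := by omega
      simp only [hqdef, if_pos h2, if_neg h3]
      have h4 : j + 1 - (L - 1) = 1 := by omega
      have h5 : j = L - 1 := by omega
      rw [h4, h5, ← hv0 i]
      exact hvadm i 0 (hcpos i)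
    · have h2 : ¬ (j < L) := by omega
      have h3 : ¬ (j + 1 < L) := by omega
      simp only [hqdef, if_neg h2, if_neg h3]
      have h4 : j + 1 - (L - 1) = (j - (L-1)) + 1 := by omega
      rw [h4]
      exact hvadm i _ (by omega)
  have hend : ∀ i, q i (m i) = p i n := by
    intro i
    have hmi := hmdef i
    have hL1' := hL1
    have hci := hcpos i
    have h2 : ¬ (m i < L) := by have := hcpos i; omega
    simp only [hqdef, if_neg h2]
    have h4 : m i - (L - 1) = c i := by omega
    rw [h4, hvc i]
  set Y : ι → Set (ShiftSpace A) :=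
    fun i => {x : ShiftSpace A | ∀ j ≤ m i, x.1 j = q i j} with hYdef
  have hYsubW : ∀ i, Y i ⊆ W := by
    intro i x hx
    have hmi := hmdef i
    have hci := hcpos i
    refine hdet1 w hw x fun j hj => ?_
    have hjn : j < n := by omega
    have hjL : j < L := by omega
    have h1 := hx j (by have := hmL i; omega)
    rw [h1]
    simp only [hqdef, if_pos hjL]
    exact hyC i j hjn
  have hYY : ∀ i i' : ι, i ≠ i' → Disjoint (Y i) (Y i') := by
    intro i i' hne
    rw [Set.disjoint_left]
    intro x hx hx'
    obtain ⟨j, hjL, hjne⟩ := hsep i i' hne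
    have h1 := hx j (by have := hmL i; omega)
    have h2 := hx' j (by have := hmL i'; omega)
    simp only [hqdef, if_pos hjL] at h1 h2
    exact hjne (h1 ▸ h2 ▸ rfl)
  have hZY : ∀ i i' : ι, Disjoint (Z i) (Y i') := by
    intro i i'
    exact Set.disjoint_of_subset (hZsubU i) (hYsubW i') hdisj
  have hpadm : ∀ i, ∀ j < n, A (p i j) (p i (j+1)) = true := fun i j _ => (wit i).2 j
  obtain ⟨α, hαfull, hαZY, hαYZ, hαinvol, hαid⟩ :=
    swap_construction ι n m p q hpadm hq hend Z Y (fun _ => rfl) (fun _ => rfl) hZZ hYY hZY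
  have hximg : ∀ x ∈ U, ∃ i, x ∈ Z i := fun x hx => mem_iUnion.mp (hUsub hx)
  refine ⟨α, hαfull, ?_, ?_, ?_⟩
  · rintro _ ⟨x, hx, rfl⟩
    obtain ⟨i, hxi⟩ := hximg x hx
    exact hYsubW i (hαZY i x hxi)
  · exact Homeomorph.ext fun x => hαinvol x
  · intro x hx
    simp only [mem_union, not_or] at hx
    refine hαid x (fun i hxi => hx.1 (hZsubU i hxi)) (fun i hxi => ?_)
    refine hx.2 ⟨α x, hZsubU i (hαYZ i x hxi), hαinvol x⟩
end

section
/- Let O ⊆ X_A be clopen and η ∈ Γ_A satisfy η(O) ∩ O^c ≠ ∅ and η(O^c) ∩ O^c ≠ ∅. Then the subgroup of Γ_A generated by Γ_O, Γ_{O^c}, and η equals Γ_A. -/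
open Set

/-!
Let `G` be the group generated by `Γ_O`, `Γ_{Oᶜ}` and `η`. Conjugating by `η`, it also contains
`Γ_{η O}` and `Γ_{η Oᶜ}`. The heart of the proof is fragmentation: if `U`, `V` are clopen and
`U ∩ V ≠ ∅`, then `Γ_{U ∪ V}` lies in any subgroup containing `Γ_U` and `Γ_V`. Applied first to
`η O` and `Oᶜ` (which meet by `h1`), then to `η O ∪ Oᶜ` and `η Oᶜ` (which meet by `h2`), it gives
`Γ_A = Γ_{η O ∪ Oᶜ ∪ η Oᶜ} ≤ G`.

For fragmentation, let `γ ∈ Γ_{U ∪ V}`. Composing with at most one swap of two cylinders inside `U` or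
inside `V`, we may assume that `γ (U \ V)` misses a nonempty clopen `W ⊆ U ∩ V`. Cut `U \ V` into
cylinders `C_i` so small that `γ` maps each `C_i` onto a cylinder `γ C_i` lying in `U` or in `V`
by replacing a prefix, and cut `W` into disjoint nonempty clopen sets `W_i` (Condition (I)).
Irreducibility provides a cylinder `D_i ⊆ W_i` whose word ends with the same letter as those of
`C_i` and `γ C_i`, so that the prefix-replacing swaps `γ C_i ↔ D_i` and `D_i ↔ C_i` exist; they lie
in `Γ_U` or `Γ_V`. The swaps of each kind have disjoint supports, and their products move `γ`
into `Γ_V`.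
-/

open Filter Topology

lemma mapsTo_of_fixes_compl {α : Type*} [TopologicalSpace α] {g : α ≃ₜ α} {S : Set α}
    (hg : ∀ x ∉ S, g x = x) : MapsTo g S S := fun x hx => by
  by_contra h
  exact h ((g.injective (hg _ h)).symm ▸ hx)

lemma exists_mem_eqOn_of_pairwiseDisjoint {α ι : Type*} [TopologicalSpace α]
    (H : Subgroup (α ≃ₜ α)) (s : Finset ι) {S : ι → Set α}
    (hS : (s : Set ι).PairwiseDisjoint S) {g : ι → α ≃ₜ α} (hgH : ∀ i ∈ s, g i ∈ H)
    (hg : ∀ i ∈ s, ∀ x ∉ S i, g i x = x) :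
    ∃ h ∈ H, (∀ i ∈ s, ∀ x ∈ S i, h x = g i x) ∧
      ∀ x, (∀ i ∈ s, x ∉ S i) → h x = x := by
  classical
  induction s using Finset.induction_on with
  | empty => exact ⟨1, H.one_mem, by simp, fun _ _ => rfl⟩
  | insert a s ha ih =>
    rw [Finset.coe_insert, pairwiseDisjoint_insert] at hS
    simp only [Finset.forall_mem_insert] at hgH hg ⊢
    obtain ⟨h, hH, heq, hfix⟩ := ih hS.1 hgH.2 hg.2
    have hne : ∀ i ∈ s, a ≠ i := fun i hi hai => ha (hai ▸ hi)
    refine ⟨g a * h, H.mul_mem hgH.1 hH, ⟨fun x hx => ?_, fun i hi x hx => ?_⟩,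
      fun x hx => ?_⟩
    · rw [homeo_mul_apply, hfix x fun i hi => (hS.2 i hi (hne i hi)).notMem_of_mem_left hx]
    · have hmem : g i x ∈ S i := mapsTo_of_fixes_compl (hg.2 i hi) hx
      rw [homeo_mul_apply, heq i hi x hx,
        hg.1 _ ((hS.2 i hi (hne i hi)).notMem_of_mem_right hmem)]
    · rw [homeo_mul_apply, hfix x hx.2, hg.1 x hx.1]

lemma isClopen_image_homeomorph {α : Type*} [TopologicalSpace α] (η : α ≃ₜ α) {O : Set α}
    (hO : IsClopen O) : IsClopen (η '' O) :=
  η.image_eq_preimage_symm O ▸ hO.preimage η.symm.continuous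

namespace ShiftSpace

variable {N : ℕ} {A : Fin N → Fin N → Bool}

/-! ### Cylinders -/

def cylinder (x : ShiftSpace A) (n : ℕ) : Set (ShiftSpace A) := {y | ∀ k < n, y.1 k = x.1 k}

def initialWord (n : ℕ) (x : ShiftSpace A) : Fin n → Fin N := fun k => x.1 k

lemma mem_cylinder_self (x : ShiftSpace A) (n : ℕ) : x ∈ cylinder x n := fun _ _ => rfl

lemma cylinder_anti (x : ShiftSpace A) : Antitone (cylinder x) :=
  fun _ _ h _ hy k hk => hy k (hk.trans_le h)

lemma mem_cylinder_iff_initialWord {x y : ShiftSpace A} {n : ℕ} :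
    y ∈ cylinder x n ↔ initialWord n y = initialWord n x := by
  simp [cylinder, initialWord, funext_iff, Fin.forall_iff]

lemma mem_cylinder_iff_of_mem {x y z : ShiftSpace A} {n p : ℕ} (hy : y ∈ cylinder x n)
    (hp : p ≤ n) : y ∈ cylinder z p ↔ x ∈ cylinder z p := by
  constructor <;> intro h k hk
  · rw [← hy k (hk.trans_le hp)]; exact h k hk
  · rw [hy k (hk.trans_le hp)]; exact h k hk

lemma disjoint_cylinder_of_initialWord_ne {x y : ShiftSpace A} {n : ℕ}
    (h : initialWord n x ≠ initialWord n y) : Disjoint (cylinder x n) (cylinder y n) :=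
  Set.disjoint_left.2 fun _ hx hy =>
    h ((mem_cylinder_iff_initialWord.1 hx).symm.trans (mem_cylinder_iff_initialWord.1 hy))

lemma continuous_initialWord (n : ℕ) : Continuous (initialWord (A := A) n) :=
  continuous_pi fun _ => (continuous_apply _).comp continuous_subtype_val

lemma isClopen_cylinder (x : ShiftSpace A) (n : ℕ) : IsClopen (cylinder x n) := by
  have : cylinder x n = initialWord n ⁻¹' {initialWord n x} := by
    ext y; exact mem_cylinder_iff_initialWord
  rw [this]
  exact (isClopen_discrete _).preimage (continuous_initialWord n)

lemma exists_cylinder_subset {G : Set (ShiftSpace A)} (hG : IsOpen G) {x : ShiftSpace A}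
    (hx : x ∈ G) : ∃ n, cylinder x n ⊆ G := by
  obtain ⟨t, ht, rfl⟩ := isOpen_induced_iff.1 hG
  obtain ⟨I, u, hIu, hsub⟩ := isOpen_pi_iff.1 ht x.1 hx
  refine ⟨I.sup id + 1, fun y hy => hsub fun a ha => ?_⟩
  rw [hy a (Nat.lt_succ_of_le (I.le_sup (f := id) ha))]
  exact (hIu a ha).2

lemma hasBasis_nhds (x : ShiftSpace A) : (𝓝 x).HasBasis (fun _ => True) (cylinder x) :=
  ⟨fun _ => ⟨fun ht => by
      obtain ⟨s, hst, hs, hxs⟩ := mem_nhds_iff.1 ht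
      obtain ⟨n, hn⟩ := exists_cylinder_subset hs hxs
      exact ⟨n, trivial, hn.trans hst⟩,
    fun ⟨n, _, hn⟩ => mem_of_superset
      ((isClopen_cylinder x n).isOpen.mem_nhds (mem_cylinder_self x n)) hn⟩⟩

lemma continuous_of_mapsTo_cylinder {f : ShiftSpace A → ShiftSpace A}
    (h : ∀ x m, ∃ n, MapsTo f (cylinder x n) (cylinder (f x) m)) : Continuous f :=
  continuous_iff_continuousAt.2 fun x =>
    ((hasBasis_nhds x).tendsto_iff (hasBasis_nhds (f x))).2
      fun m _ => (h x m).imp fun _ hn => ⟨trivial, hn⟩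

lemma continuous_of_eq_on_cylinder {β : Type*} [TopologicalSpace β] {f : ShiftSpace A → β}
    (h : ∀ x, ∃ n, ∀ y ∈ cylinder x n, f y = f x) : Continuous f :=
  ((IsLocallyConstant.iff_eventually_eq f).2 fun x =>
    (hasBasis_nhds x).eventually_iff.2 ((h x).imp fun _ hn => ⟨trivial, hn⟩)).continuous

lemma shiftMap_iterate_apply (m : ℕ) (x : ShiftSpace A) (n : ℕ) :
    ((shiftMap A)^[m] x).1 n = x.1 (n + m) := by
  induction m generalizing x n with
  | zero => rfl
  | succ m ih =>
    rw [Function.iterate_succ_apply, ih (shiftMap A x) n]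
    exact congrArg x.1 (by omega)

lemma apply_of_shiftMap_iterate_eq {u v : ShiftSpace A} {k l : ℕ}
    (h : (shiftMap A)^[k] u = (shiftMap A)^[l] v) {j : ℕ} (hj : k ≤ j) :
    u.1 j = v.1 (j - k + l) := by
  have := congrArg (fun w : ShiftSpace A => w.1 (j - k)) h
  simp only [shiftMap_iterate_apply, Nat.sub_add_cancel hj] at this
  exact this

lemma adj_of_mem_cylinder {x z : ShiftSpace A} {p : ℕ} (hx : x ∈ cylinder z p) (hp : 1 ≤ p) :
    A (z.1 (p - 1)) (x.1 p) = true := by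
  rw [← hx (p - 1) (by omega)]
  simpa [Nat.sub_add_cancel hp] using x.2 (p - 1)

/-! ### Prefix replacement and cylinder swaps -/

/-- The sequence `t₀ ⋯ t_{q-1} x_p x_{p+1} ⋯`, or `x` itself when that sequence is not
admissible. -/
def splice (t : ShiftSpace A) (q : ℕ) (x : ShiftSpace A) (p : ℕ) : ShiftSpace A :=
  if h : 1 ≤ q ∧ A (t.1 (q - 1)) (x.1 p) = true then
    ⟨fun n => if n < q then t.1 n else x.1 (n - q + p), fun n => by
      rcases lt_trichotomy (n + 1) q with hn | hn | hn
      · simpa [show n < q by omega, hn] using t.2 n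
      · obtain rfl : n = q - 1 := by omega
        simpa [show q - 1 < q by omega, hn] using h.2
      · simpa [show ¬n < q by omega, show ¬n + 1 < q by omega,
          show n + 1 - q + p = n - q + p + 1 by omega] using x.2 (n - q + p)⟩
  else x

section Splice

variable {t x z : ShiftSpace A} {p q : ℕ}

lemma splice_apply (hq : 1 ≤ q) (hA : A (t.1 (q - 1)) (x.1 p) = true) (n : ℕ) :
    (splice t q x p).1 n = if n < q then t.1 n else x.1 (n - q + p) := by
  rw [splice, dif_pos ⟨hq, hA⟩]

lemma splice_mem_cylinder (hq : 1 ≤ q) (hA : A (t.1 (q - 1)) (x.1 p) = true) :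
    splice t q x p ∈ cylinder t q := fun k hk => by
  rw [splice_apply hq hA, if_pos hk]

lemma shiftMap_iterate_splice (hq : 1 ≤ q) (hA : A (t.1 (q - 1)) (x.1 p) = true) :
    (shiftMap A)^[q] (splice t q x p) = (shiftMap A)^[p] x := by
  refine Subtype.ext (funext fun n => ?_)
  simp only [shiftMap_iterate_apply, splice_apply hq hA, if_neg (show ¬n + q < q by omega),
    Nat.add_sub_cancel]

lemma splice_splice {u : ShiftSpace A} {r : ℕ} (hq : 1 ≤ q) (hr : 1 ≤ r)
    (hA : A (t.1 (q - 1)) (x.1 p) = true) (hB : A (u.1 (r - 1)) (x.1 p) = true) :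
    splice u r (splice t q x p) q = splice u r x p := by
  have hB' : A (u.1 (r - 1)) ((splice t q x p).1 q) = true := by
    simpa [splice_apply hq hA] using hB
  refine Subtype.ext (funext fun n => ?_)
  simp only [splice_apply hr hB', splice_apply hr hB, splice_apply hq hA,
    if_neg (show ¬n - r + q < q by omega), Nat.add_sub_cancel]

lemma splice_eq_of_shiftMap_iterate_eq {w : ShiftSpace A} (hx : x ∈ cylinder z p) (hp : 1 ≤ p)
    (h : (shiftMap A)^[q] w = (shiftMap A)^[p] x) : splice z p w q = x := by
  have hA : A (z.1 (p - 1)) (w.1 q) = true := by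
    simpa [apply_of_shiftMap_iterate_eq h le_rfl] using adj_of_mem_cylinder hx hp
  refine Subtype.ext (funext fun n => ?_)
  rw [splice_apply hp hA]
  split_ifs with hn
  · exact (hx n hn).symm
  · rw [apply_of_shiftMap_iterate_eq h (Nat.le_add_left q (n - p))]
    exact congrArg x.1 (by omega)

lemma splice_self_of_mem (hx : x ∈ cylinder z p) (hp : 1 ≤ p) : splice z p x p = x :=
  splice_eq_of_shiftMap_iterate_eq hx hp rfl

open Classical in
noncomputable def cylinderSwapFun (z : ShiftSpace A) (p : ℕ) (t : ShiftSpace A) (q : ℕ)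
    (x : ShiftSpace A) : ShiftSpace A :=
  if x ∈ cylinder z p then splice t q x p else if x ∈ cylinder t q then splice z p x q else x

lemma cylinderSwapFun_of_mem_left (hx : x ∈ cylinder z p) :
    cylinderSwapFun z p t q x = splice t q x p := by
  rw [cylinderSwapFun, if_pos hx]

lemma cylinderSwapFun_of_mem_right (hdisj : Disjoint (cylinder z p) (cylinder t q))
    (hx : x ∈ cylinder t q) : cylinderSwapFun z p t q x = splice z p x q := by
  rw [cylinderSwapFun, if_neg (hdisj.notMem_of_mem_right hx), if_pos hx]

lemma cylinderSwapFun_of_notMem (hz : x ∉ cylinder z p) (ht : x ∉ cylinder t q) :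
    cylinderSwapFun z p t q x = x := by
  rw [cylinderSwapFun, if_neg hz, if_neg ht]

lemma splice_splice_of_mem (hp : 1 ≤ p) (hq : 1 ≤ q) (hlast : z.1 (p - 1) = t.1 (q - 1))
    (hx : x ∈ cylinder z p) :
    splice t q x p ∈ cylinder t q ∧ splice z p (splice t q x p) q = x := by
  have hA := hlast ▸ adj_of_mem_cylinder hx hp
  exact ⟨splice_mem_cylinder hq hA,
    (splice_splice hq hp hA (adj_of_mem_cylinder hx hp)).trans (splice_self_of_mem hx hp)⟩

lemma cylinderSwapFun_involutive (hp : 1 ≤ p) (hq : 1 ≤ q) (hlast : z.1 (p - 1) = t.1 (q - 1))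
    (hdisj : Disjoint (cylinder z p) (cylinder t q)) :
    Function.Involutive (cylinderSwapFun z p t q) := by
  intro x
  by_cases hz : x ∈ cylinder z p
  · obtain ⟨hmem, hinv⟩ := splice_splice_of_mem hp hq hlast hz
    rw [cylinderSwapFun_of_mem_left hz, cylinderSwapFun_of_mem_right hdisj hmem, hinv]
  by_cases ht : x ∈ cylinder t q
  · obtain ⟨hmem, hinv⟩ := splice_splice_of_mem hq hp hlast.symm ht
    rw [cylinderSwapFun_of_mem_right hdisj ht, cylinderSwapFun_of_mem_left hmem, hinv]
  rw [cylinderSwapFun_of_notMem hz ht, cylinderSwapFun_of_notMem hz ht]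

lemma continuous_cylinderSwapFun (hp : 1 ≤ p) (hq : 1 ≤ q) (hlast : z.1 (p - 1) = t.1 (q - 1))
    (hdisj : Disjoint (cylinder z p) (cylinder t q)) : Continuous (cylinderSwapFun z p t q) := by
  refine continuous_of_mapsTo_cylinder fun x m =>
    ⟨max (max p q) (m + p + q), fun y hy j hj => ?_⟩
  have hzy := mem_cylinder_iff_of_mem (z := z) hy (by omega : p ≤ max (max p q) (m + p + q))
  have hty := mem_cylinder_iff_of_mem (z := t) hy (by omega : q ≤ max (max p q) (m + p + q))
  by_cases hz : x ∈ cylinder z p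
  · have hA := hlast ▸ adj_of_mem_cylinder hz hp
    have hA' := hlast ▸ adj_of_mem_cylinder (hzy.2 hz) hp
    rw [cylinderSwapFun_of_mem_left hz, cylinderSwapFun_of_mem_left (hzy.2 hz),
      splice_apply hq hA, splice_apply hq hA']
    split_ifs
    · rfl
    · exact hy _ (by omega)
  by_cases ht : x ∈ cylinder t q
  · have hA := hlast.symm ▸ adj_of_mem_cylinder ht hq
    have hA' := hlast.symm ▸ adj_of_mem_cylinder (hty.2 ht) hq
    rw [cylinderSwapFun_of_mem_right hdisj ht, cylinderSwapFun_of_mem_right hdisj (hty.2 ht),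
      splice_apply hp hA, splice_apply hp hA']
    split_ifs
    · rfl
    · exact hy _ (by omega)
  rw [cylinderSwapFun_of_notMem hz ht, cylinderSwapFun_of_notMem (mt hzy.1 hz) (mt hty.1 ht)]
  exact hy _ (by omega)

noncomputable def cylinderSwap (z : ShiftSpace A) (p : ℕ) (t : ShiftSpace A) (q : ℕ)
    (hp : 1 ≤ p) (hq : 1 ≤ q) (hlast : z.1 (p - 1) = t.1 (q - 1))
    (hdisj : Disjoint (cylinder z p) (cylinder t q)) : ShiftSpace A ≃ₜ ShiftSpace A where
  toFun := cylinderSwapFun z p t q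
  invFun := cylinderSwapFun z p t q
  left_inv := cylinderSwapFun_involutive hp hq hlast hdisj
  right_inv := cylinderSwapFun_involutive hp hq hlast hdisj
  continuous_toFun := continuous_cylinderSwapFun hp hq hlast hdisj
  continuous_invFun := continuous_cylinderSwapFun hp hq hlast hdisj

@[simp] lemma cylinderSwap_apply (hp : 1 ≤ p) (hq : 1 ≤ q) (hlast : z.1 (p - 1) = t.1 (q - 1))
    (hdisj : Disjoint (cylinder z p) (cylinder t q)) (x : ShiftSpace A) :
    cylinderSwap z p t q hp hq hlast hdisj x = cylinderSwapFun z p t q x := rfl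

open Classical in
lemma cylinderSwap_mem_localGroup (hp : 1 ≤ p) (hq : 1 ≤ q)
    (hlast : z.1 (p - 1) = t.1 (q - 1)) (hdisj : Disjoint (cylinder z p) (cylinder t q)) :
    cylinderSwap z p t q hp hq hlast hdisj ∈ localGroup A (cylinder z p ∪ cylinder t q) := by
  refine ⟨⟨fun x => if x ∈ cylinder z p then q else if x ∈ cylinder t q then p else 0,
    fun x => if x ∈ cylinder z p then p else if x ∈ cylinder t q then q else 0, ?_, ?_, ?_⟩,
    fun x hx => cylinderSwapFun_of_notMem (fun h => hx (.inl h)) (fun h => hx (.inr h))⟩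
  iterate 2
    refine continuous_of_eq_on_cylinder fun x => ⟨max p q, fun y hy => ?_⟩
    simp only [mem_cylinder_iff_of_mem hy (le_max_left p q),
      mem_cylinder_iff_of_mem hy (le_max_right p q)]
  intro x
  simp only [cylinderSwap_apply]
  by_cases hz : x ∈ cylinder z p
  · simp only [if_pos hz, cylinderSwapFun_of_mem_left hz]
    exact shiftMap_iterate_splice hq (hlast ▸ adj_of_mem_cylinder hz hp)
  by_cases ht : x ∈ cylinder t q
  · simp only [if_neg hz, if_pos ht, cylinderSwapFun_of_mem_right hdisj ht]
    exact shiftMap_iterate_splice hp (hlast.symm ▸ adj_of_mem_cylinder ht hq)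
  simp only [if_neg hz, if_neg ht, cylinderSwapFun_of_notMem hz ht]

end Splice

/-! ### Compactness, Condition (I) and irreducibility -/

lemma compactSpace_of_conditionI (hI : ConditionI A) : CompactSpace (ShiftSpace A) :=
  (Classical.choice hI).symm.compactSpace

lemma eventually_eq_on_cylinder [CompactSpace (ShiftSpace A)] {β : Type*} [TopologicalSpace β]
    [DiscreteTopology β] {f : ShiftSpace A → β} (hf : Continuous f) :
    ∀ᶠ n in atTop, ∀ x, ∀ y ∈ cylinder x n, f y = f x := by
  have hloc : ∀ x, ∃ n, cylinder x n ⊆ f ⁻¹' {f x} := fun x =>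
    exists_cylinder_subset ((isOpen_discrete _).preimage hf) rfl
  choose m hm using hloc
  obtain ⟨s, hs⟩ := isCompact_univ.elim_finite_subcover (fun x => cylinder x (m x))
    (fun x => (isClopen_cylinder x (m x)).isOpen)
    (fun x _ => mem_iUnion.2 ⟨x, mem_cylinder_self x (m x)⟩)
  filter_upwards [eventually_ge_atTop (s.sup m)] with n hn x y hy
  obtain ⟨c, hc, hxc⟩ : ∃ c ∈ s, x ∈ cylinder c (m c) := by simpa using hs (mem_univ x)
  have hyc : y ∈ cylinder c (m c) :=
    (mem_cylinder_iff_of_mem hy ((s.le_sup hc).trans hn)).2 hxc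
  exact (hm c hyc).trans (hm c hxc).symm

lemma eventually_cylinder_subset [CompactSpace (ShiftSpace A)] {P : Set (ShiftSpace A)}
    (hP : IsClopen P) : ∀ᶠ n in atTop, ∀ x ∈ P, cylinder x n ⊆ P := by
  filter_upwards [eventually_eq_on_cylinder ((continuous_boolIndicator_iff_isClopen P).2 hP)]
    with n hn x hx y hy
  simpa [boolIndicator, hx] using hn x y hy

lemma exists_ne_mem_of_isOpen (hI : ConditionI A) {K : Set (ShiftSpace A)} (hK : IsOpen K)
    {x : ShiftSpace A} (hx : x ∈ K) : ∃ y ∈ K, y ≠ x := by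
  obtain ⟨φ⟩ := hI
  obtain ⟨I, u, hIu, hsub⟩ := isOpen_pi_iff.1 (φ.isOpenMap K hK) (φ x) ⟨x, hx, rfl⟩
  obtain ⟨i, hi⟩ := Infinite.exists_notMem_finset I
  let c : ℕ → Bool := fun j => if j ∈ I then φ x j else !φ x j
  have hc : c ∈ φ '' K := hsub fun a ha => by simpa [c, Finset.mem_coe.1 ha] using (hIu a ha).2
  obtain ⟨y, hy, hyc⟩ := hc
  refine ⟨y, hy, fun hxy => ?_⟩
  have := congrFun hyc i
  simp [c, hi, hxy] at this

lemma exists_disjoint_clopen (hI : ConditionI A) {K : Set (ShiftSpace A)} (hK : IsClopen K)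
    (hne : K.Nonempty) : ∃ K₁ K₂ : Set (ShiftSpace A), IsClopen K₁ ∧ IsClopen K₂ ∧
      K₁.Nonempty ∧ K₂.Nonempty ∧ K₁ ⊆ K ∧ K₂ ⊆ K ∧ Disjoint K₁ K₂ := by
  obtain ⟨x, hx⟩ := hne
  obtain ⟨y, hy, hyx⟩ := exists_ne_mem_of_isOpen hI hK.isOpen hx
  obtain ⟨j, hj⟩ : ∃ j, y.1 j ≠ x.1 j := by
    by_contra! h
    exact hyx (Subtype.ext (funext h))
  refine ⟨K ∩ cylinder x (j + 1), K \ cylinder x (j + 1), hK.inter (isClopen_cylinder _ _),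
    hK.diff (isClopen_cylinder _ _), ⟨x, hx, mem_cylinder_self _ _⟩,
    ⟨y, hy, fun h => hj (h j j.lt_succ_self)⟩, inter_subset_left, sdiff_subset,
    disjoint_sdiff_right.mono_left inter_subset_right⟩

lemma exists_pairwiseDisjoint_clopen (hI : ConditionI A) {K : Set (ShiftSpace A)}
    (hK : IsClopen K) (hne : K.Nonempty) {ι : Type*} (s : Finset ι) :
    ∃ Z : ι → Set (ShiftSpace A),
      (∀ i ∈ s, IsClopen (Z i) ∧ (Z i).Nonempty ∧ Z i ⊆ K) ∧
      (s : Set ι).PairwiseDisjoint Z := by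
  classical
  induction s using Finset.induction_on generalizing K with
  | empty => exact ⟨fun _ => K, by simp, by simp⟩
  | insert a s ha ih =>
    obtain ⟨K₁, K₂, hK₁, hK₂, hne₁, hne₂, hsub₁, hsub₂, hd⟩ :=
      exists_disjoint_clopen hI hK hne
    obtain ⟨Z, hZ, hZd⟩ := ih hK₂ hne₂
    have hZK₂ : ∀ i ∈ s, Disjoint K₁ (Z i) := fun i hi => hd.mono_right (hZ i hi).2.2
    refine ⟨Function.update Z a K₁, ?_, ?_⟩
    · simp only [Finset.forall_mem_insert, Function.update_self]
      refine ⟨⟨hK₁, hne₁, hsub₁⟩, fun i hi => ?_⟩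
      rw [Function.update_of_ne (by rintro rfl; exact ha hi)]
      exact ⟨(hZ i hi).1, (hZ i hi).2.1, (hZ i hi).2.2.trans hsub₂⟩
    · rw [Finset.coe_insert, pairwiseDisjoint_insert]
      refine ⟨fun i hi j hj hij => ?_, fun j hj _ => ?_⟩
      · simp only [Function.onFun, Function.update_of_ne (show i ≠ a by rintro rfl; exact ha hi),
          Function.update_of_ne (show j ≠ a by rintro rfl; exact ha hj)]
        exact hZd hi hj hij
      · simp only [Function.update_self,
          Function.update_of_ne (show j ≠ a by rintro rfl; exact ha hj)]
        exact hZK₂ j hj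

lemma exists_finset_pairwiseDisjoint_cylinder (C : Set (ShiftSpace A)) (n : ℕ) :
    ∃ T : Finset (ShiftSpace A), ↑T ⊆ C ∧ (T : Set (ShiftSpace A)).PairwiseDisjoint
      (cylinder · n) ∧ C ⊆ ⋃ x ∈ T, cylinder x n := by
  classical
  rcases C.eq_empty_or_nonempty with rfl | ⟨x₀, -⟩
  · exact ⟨∅, by simp⟩
  have : Nonempty (ShiftSpace A) := ⟨x₀⟩
  set rep := Function.invFunOn (initialWord n) C
  have hrep : ∀ w, (∃ x ∈ C, initialWord n x = w) →
      rep w ∈ C ∧ initialWord n (rep w) = w :=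
    fun _ => Function.invFunOn_pos
  refine ⟨(Finset.univ.filter fun w => ∃ x ∈ C, initialWord n x = w).image rep, ?_, ?_, ?_⟩
  · intro y hy
    obtain ⟨w, hw, rfl⟩ := Finset.mem_image.1 hy
    exact (hrep w (Finset.mem_filter.1 hw).2).1
  · intro y₁ hy₁ y₂ hy₂ hne
    obtain ⟨w₁, hw₁, rfl⟩ := Finset.mem_image.1 hy₁
    obtain ⟨w₂, hw₂, rfl⟩ := Finset.mem_image.1 hy₂
    refine disjoint_cylinder_of_initialWord_ne fun h => hne ?_
    rw [(hrep w₁ (Finset.mem_filter.1 hw₁).2).2,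
      (hrep w₂ (Finset.mem_filter.1 hw₂).2).2] at h
    rw [h]
  · intro x hx
    have hw := hrep _ ⟨x, hx, rfl⟩
    exact mem_iUnion₂.2 ⟨_, Finset.mem_image_of_mem _ (Finset.mem_filter.2
      ⟨Finset.mem_univ _, x, hx, rfl⟩), mem_cylinder_iff_initialWord.2 hw.2.symm⟩

lemma exists_apply_zero_eq (hA : MatrixIrreducible A) (e : Fin N) :
    ∃ P : ShiftSpace A, P.1 0 = e := by
  have hnext : ∀ d, ∃ d', A d d' = true := fun d => by
    obtain ⟨n, hn, w, h0, -, hw⟩ := hA d d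
    exact ⟨w 1, h0 ▸ hw 0 hn⟩
  choose next hnext using hnext
  exact ⟨⟨fun i => next^[i] e, fun i => by
    simpa only [Function.iterate_succ_apply'] using hnext _⟩, rfl⟩

lemma exists_apply_zero_eq_apply_eq (hA : MatrixIrreducible A) (c e : Fin N) :
    ∃ (P : ShiftSpace A) (n : ℕ), 1 ≤ n ∧ P.1 0 = c ∧ P.1 n = e := by
  obtain ⟨n, hn, w, h0, hwn, hw⟩ := hA c e
  obtain ⟨Q, hQ⟩ := exists_apply_zero_eq hA e
  refine ⟨⟨fun i => if i < n then w i else Q.1 (i - n), fun i => ?_⟩, n, hn, ?_, ?_⟩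
  · rcases lt_trichotomy (i + 1) n with hi | hi | hi
    · simpa [show i < n by omega, hi] using hw i (by omega)
    · simpa [show i < n by omega, hi, hQ, ← hwn] using hw i (by omega)
    · simpa [show ¬i < n by omega, show ¬i + 1 < n by omega, show i + 1 - n = i - n + 1 by omega]
        using Q.2 (i - n)
  · simp [hn, h0]
  · simp [hQ]

lemma exists_cylinder_subset_last_eq (hA : MatrixIrreducible A) {Z : Set (ShiftSpace A)}
    (hZ : IsOpen Z) (hne : Z.Nonempty) (e : Fin N) :
    ∃ (t : ShiftSpace A) (q : ℕ), 1 ≤ q ∧ cylinder t q ⊆ Z ∧ t.1 (q - 1) = e := by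
  obtain ⟨u, hu⟩ := hne
  obtain ⟨a₀, ha₀⟩ := exists_cylinder_subset hZ hu
  set a := max a₀ 1
  obtain ⟨P, n, hn, hP0, hPn⟩ := exists_apply_zero_eq_apply_eq hA (u.1 (a - 1)) e
  have hadj : A (u.1 (a - 1)) (P.1 1) = true := hP0 ▸ P.2 0
  have ha : 1 ≤ a := le_max_right _ _
  refine ⟨splice u a P 1, a + n, by omega, fun y hy => ha₀ ?_, ?_⟩
  · refine cylinder_anti u (le_max_left a₀ 1) ?_
    exact (mem_cylinder_iff_of_mem (cylinder_anti _ (by omega) hy) le_rfl).2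
      (splice_mem_cylinder ha hadj)
  · rw [splice_apply ha hadj, if_neg (by omega), show a + n - 1 - a + 1 = n by omega, hPn]

/-! ### Elements of the full group act locally by prefix replacement -/

structure SplicesAt (γ : ShiftSpace A ≃ₜ ShiftSpace A) (x : ShiftSpace A) (n p : ℕ) :
    Prop where
  one_le_left : 1 ≤ n
  one_le_right : 1 ≤ p
  last_eq : (γ x).1 (p - 1) = x.1 (n - 1)
  apply_eq : ∀ y ∈ cylinder x n, γ y = splice (γ x) p y n

namespace SplicesAt

variable {γ : ShiftSpace A ≃ₜ ShiftSpace A} {x : ShiftSpace A} {n p : ℕ}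

lemma splice_apply_eq (h : SplicesAt γ x n p) {y : ShiftSpace A} (hy : y ∈ cylinder x n) :
    splice x n (γ y) p = y := by
  have hB := adj_of_mem_cylinder hy h.one_le_left
  rw [h.apply_eq y hy, splice_splice h.one_le_right h.one_le_left (h.last_eq ▸ hB) hB,
    splice_self_of_mem hy h.one_le_left]

lemma image_cylinder (h : SplicesAt γ x n p) : γ '' cylinder x n = cylinder (γ x) p := by
  refine Subset.antisymm ?_ fun w hw => ?_
  · rintro _ ⟨y, hy, rfl⟩
    rw [h.apply_eq y hy]
    exact splice_mem_cylinder h.one_le_right (h.last_eq ▸ adj_of_mem_cylinder hy h.one_le_left)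
  · have hB := adj_of_mem_cylinder hw h.one_le_right
    have hA : A (x.1 (n - 1)) (w.1 p) = true := h.last_eq ▸ hB
    refine ⟨splice x n w p, splice_mem_cylinder h.one_le_left hA, ?_⟩
    rw [h.apply_eq _ (splice_mem_cylinder h.one_le_left hA),
      splice_splice h.one_le_left h.one_le_right hA hB, splice_self_of_mem hw h.one_le_right]

end SplicesAt

lemma exists_splicesAt (hI : ConditionI A) {γ : ShiftSpace A ≃ₜ ShiftSpace A}
    (hγ : γ ∈ fullGroup A) (m : ℕ) : ∃ n ≥ m, ∀ x, ∃ p ≥ m, SplicesAt γ x n p := by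
  have := compactSpace_of_conditionI hI
  obtain ⟨k, l, hk, hl, heq⟩ := hγ
  obtain ⟨K, hK⟩ := (isCompact_range hk).bddAbove
  obtain ⟨L, hL⟩ := (isCompact_range hl).bddAbove
  have hF : Continuous fun x => (k x, l x, initialWord K (γ x)) :=
    hk.prodMk (hl.prodMk ((continuous_initialWord K).comp γ.continuous))
  obtain ⟨n, hconst, hn⟩ :=
    ((eventually_eq_on_cylinder hF).and (eventually_ge_atTop (m + L + 1))).exists
  refine ⟨n, by omega, fun x => ?_⟩
  have hkx : k x ≤ K := hK ⟨x, rfl⟩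
  have hlx : l x ≤ L := hL ⟨x, rfl⟩
  have hcoord : ∀ y j, k y ≤ j → (γ y).1 j = y.1 (j - k y + l y) := fun y _ =>
    apply_of_shiftMap_iterate_eq (heq y)
  have hlast : (γ x).1 (k x + (n - l x) - 1) = x.1 (n - 1) := by
    rw [hcoord x _ (by omega)]
    exact congrArg x.1 (by omega)
  refine ⟨k x + (n - l x), by omega, by omega, by omega, hlast, fun y hy => ?_⟩
  simp only [Prod.mk.injEq] at hconst
  obtain ⟨hky, hly, hword⟩ := hconst x y hy
  have hA := hlast ▸ adj_of_mem_cylinder hy (by omega)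
  refine Subtype.ext (funext fun j => ?_)
  rw [splice_apply (by omega) hA]
  split_ifs with hj
  · by_cases hjk : j < k x
    · exact congrFun hword ⟨j, by omega⟩
    rw [hcoord y j (by omega), hcoord x j (by omega), hky, hly]
    exact hy _ (by omega)
  · rw [hcoord y j (by omega), hky, hly]
    exact congrArg y.1 (by omega)

/-! ### Fragmentation -/

lemma localGroup_mono {O O' : Set (ShiftSpace A)} (h : O ⊆ O') :
    localGroup A O ≤ localGroup A O' :=
  fun _ hγ => ⟨hγ.1, fun x hx => hγ.2 x fun hxO => hx (h hxO)⟩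

lemma localGroup_image_le {η : ShiftSpace A ≃ₜ ShiftSpace A} {O : Set (ShiftSpace A)}
    {G : Subgroup (ShiftSpace A ≃ₜ ShiftSpace A)} (hη : η ∈ fullGroup A) (hηG : η ∈ G)
    (hO : localGroup A O ≤ G) : localGroup A (η '' O) ≤ G := by
  intro θ hθ
  have hconj : η⁻¹ * θ * η ∈ localGroup A O := by
    refine ⟨mul_mem (mul_mem (inv_mem hη) hθ.1) hη, fun x hx => ?_⟩
    rw [homeo_mul_apply, homeo_mul_apply, homeo_inv_apply,
      hθ.2 _ fun h => hx (η.injective.mem_set_image.1 h), η.symm_apply_apply]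
  simpa [mul_assoc] using G.mul_mem (G.mul_mem hηG (hO hconj)) (G.inv_mem hηG)

lemma exists_mem_localGroup_splice (hA : MatrixIrreducible A) {U V : Set (ShiftSpace A)}
    {G : Subgroup (ShiftSpace A ≃ₜ ShiftSpace A)} (hGU : localGroup A U ≤ G)
    (hGV : localGroup A V ≤ G) {a b : ShiftSpace A} {n p : ℕ} (hn : 1 ≤ n) (hp : 1 ≤ p)
    (hlast : b.1 (p - 1) = a.1 (n - 1)) (haU : cylinder a n ⊆ U)
    (hbUV : cylinder b p ⊆ U ∨ cylinder b p ⊆ V) {Z : Set (ShiftSpace A)} (hZ : IsOpen Z)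
    (hZne : Z.Nonempty) (hZUV : Z ⊆ U ∩ V) (hZa : Disjoint Z (cylinder a n))
    (hZb : Disjoint Z (cylinder b p)) :
    ∃ s ∈ G, s ∈ localGroup A (cylinder b p ∪ Z) ∧
      ∃ r ∈ G, r ∈ localGroup A (Z ∪ cylinder a n) ∧
      ∀ y ∈ cylinder b p, s y ∈ Z ∧ r (s y) = splice a n y p := by
  obtain ⟨hZU, hZV⟩ := subset_inter_iff.1 hZUV
  obtain ⟨t, q, hq, htZ, htlast⟩ := exists_cylinder_subset_last_eq hA hZ hZne (a.1 (n - 1))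
  have hbt : b.1 (p - 1) = t.1 (q - 1) := hlast.trans htlast.symm
  have hs := cylinderSwap_mem_localGroup hp hq hbt (hZb.mono_left htZ).symm
  have hr := cylinderSwap_mem_localGroup hq hn htlast (hZa.mono_left htZ)
  refine ⟨_, ?_, localGroup_mono (union_subset_union_right _ htZ) hs,
    _, hGU (localGroup_mono (union_subset (htZ.trans hZU) haU) hr),
    localGroup_mono (union_subset_union_left _ htZ) hr, fun y hy => ?_⟩
  · rcases hbUV with h | h
    · exact hGU (localGroup_mono (union_subset h (htZ.trans hZU)) hs)
    · exact hGV (localGroup_mono (union_subset h (htZ.trans hZV)) hs)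
  · have hA := hbt ▸ adj_of_mem_cylinder hy hp
    have hmem := splice_mem_cylinder hq hA
    simp only [cylinderSwap_apply, cylinderSwapFun_of_mem_left hy,
      cylinderSwapFun_of_mem_left hmem]
    exact ⟨htZ hmem, splice_splice hq hn hA (hlast ▸ adj_of_mem_cylinder hy hp)⟩

lemma exists_cylinder_partition_splicesAt (hI : ConditionI A) {U V : Set (ShiftSpace A)}
    (hU : IsClopen U) (hV : IsClopen V) {γ : ShiftSpace A ≃ₜ ShiftSpace A}
    (hγ : γ ∈ localGroup A (U ∪ V)) :
    ∃ (n : ℕ) (T : Finset (ShiftSpace A)) (p : ShiftSpace A → ℕ),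
      (T : Set (ShiftSpace A)).PairwiseDisjoint (cylinder · n) ∧
      U \ V ⊆ ⋃ x ∈ T, cylinder x n ∧
      ∀ x ∈ T, cylinder x n ⊆ U \ V ∧ SplicesAt γ x n (p x) ∧
        (cylinder (γ x) (p x) ⊆ U ∨ cylinder (γ x) (p x) ⊆ V) := by
  have := compactSpace_of_conditionI hI
  obtain ⟨m, hm⟩ := eventually_atTop.1 ((eventually_cylinder_subset hU).and
    ((eventually_cylinder_subset hV).and (eventually_cylinder_subset (hU.diff hV))))
  obtain ⟨n, hmn, hsplice⟩ := exists_splicesAt hI hγ.1 m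
  choose p hmp hp using hsplice
  obtain ⟨T, hTC, hTdisj, hCT⟩ := exists_finset_pairwiseDisjoint_cylinder (U \ V) n
  refine ⟨n, T, p, hTdisj, hCT, fun x hx => ⟨(hm n hmn).2.2 x (hTC hx), hp x, ?_⟩⟩
  rcases mapsTo_of_fixes_compl hγ.2 (Or.inl (hTC hx).1) with h | h
  · exact .inl ((hm (p x) (hmp x)).1 _ h)
  · exact .inr ((hm (p x) (hmp x)).2.1 _ h)

lemma mem_of_forall_apply_notMem (hA : MatrixIrreducible A) (hI : ConditionI A)
    {U V : Set (ShiftSpace A)} (hU : IsClopen U) (hV : IsClopen V)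
    {G : Subgroup (ShiftSpace A ≃ₜ ShiftSpace A)} (hGU : localGroup A U ≤ G)
    (hGV : localGroup A V ≤ G) {γ : ShiftSpace A ≃ₜ ShiftSpace A}
    (hγ : γ ∈ localGroup A (U ∪ V)) {W : Set (ShiftSpace A)} (hW : IsClopen W)
    (hWne : W.Nonempty) (hWUV : W ⊆ U ∩ V) (hγW : ∀ x ∈ U \ V, γ x ∉ W) : γ ∈ G := by
  obtain ⟨n, T, p, hTdisj, hCT, hT⟩ := exists_cylinder_partition_splicesAt hI hU hV hγ
  choose hcylC hp hγUV using hT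
  obtain ⟨Z, hZ, hZdisj⟩ := exists_pairwiseDisjoint_clopen hI hW hWne T
  have hWC : Disjoint W (U \ V) := disjoint_left.2 fun w hwW hw => hw.2 (hWUV hwW).2
  have hWimg : ∀ x ∈ T, Disjoint W (cylinder (γ x) (p x)) := fun x hx => by
    rw [← (hp x hx).image_cylinder]
    exact disjoint_left.2 fun w hwW ⟨y, hy, hyw⟩ => hγW y (hcylC x hx hy) (hyw ▸ hwW)
  have hZW : ∀ x ∈ T, Z x ⊆ W := fun x hx => (hZ x hx).2.2
  choose! s hsG hs r hrG hr hsr using fun x hx => exists_mem_localGroup_splice hA hGU hGV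
    (hp x hx).one_le_left (hp x hx).one_le_right (hp x hx).last_eq (fun y hy => (hcylC x hx hy).1)
    (hγUV x hx) (hZ x hx).1.isOpen (hZ x hx).2.1 ((hZW x hx).trans hWUV)
    ((hWC.mono (hZW x hx) (hcylC x hx))) ((hWimg x hx).mono_left (hZW x hx))
  have hD : (T : Set (ShiftSpace A)).PairwiseDisjoint fun x => cylinder (γ x) (p x) ∪ Z x := by
    intro i hi j hj hij
    refine Disjoint.union_left (Disjoint.union_right ?_ ((hWimg i hi).mono_left (hZW j hj)).symm)
      (Disjoint.union_right ((hWimg j hj).mono_left (hZW i hi)) (hZdisj hi hj hij))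
    rw [← (hp i hi).image_cylinder, ← (hp j hj).image_cylinder]
    exact (disjoint_image_iff γ.injective).2 (hTdisj hi hj hij)
  have hR : (T : Set (ShiftSpace A)).PairwiseDisjoint fun x => Z x ∪ cylinder x n :=
    fun i hi j hj hij => Disjoint.union_left
      (Disjoint.union_right (hZdisj hi hj hij) (hWC.mono (hZW i hi) (hcylC j hj)))
      (Disjoint.union_right (hWC.mono (hZW j hj) (hcylC i hi)).symm (hTdisj hi hj hij))
  obtain ⟨sP, hsP, hsPeq, hsPfix⟩ :=
    exists_mem_eqOn_of_pairwiseDisjoint (G ⊓ fullGroup A) T hD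
    (fun x hx => ⟨hsG x hx, (hs x hx).1⟩) (fun x hx => (hs x hx).2)
  obtain ⟨rP, hrP, hrPeq, hrPfix⟩ :=
    exists_mem_eqOn_of_pairwiseDisjoint (G ⊓ fullGroup A) T hR
    (fun x hx => ⟨hrG x hx, (hr x hx).1⟩) (fun x hx => (hr x hx).2)
  have hτ : rP * sP * γ ∈ localGroup A V := by
    refine ⟨mul_mem (mul_mem hrP.2 hsP.2) hγ.1, fun y hyV => ?_⟩
    rw [homeo_mul_apply, homeo_mul_apply]
    by_cases hyU : y ∈ U
    · obtain ⟨x, hx, hyx⟩ := mem_iUnion₂.1 (hCT ⟨hyU, hyV⟩)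
      have hγy : γ y ∈ cylinder (γ x) (p x) := (hp x hx).image_cylinder ▸ ⟨y, hyx, rfl⟩
      obtain ⟨hsZ, hrs⟩ := hsr x hx _ hγy
      rw [hsPeq x hx _ (.inl hγy), hrPeq x hx _ (.inl hsZ), hrs, (hp x hx).splice_apply_eq hyx]
    · have hy : y ∉ U ∪ V := fun h => h.elim hyU hyV
      rw [hγ.2 y hy, hsPfix y fun x hx h => hy ?_, hrPfix y fun x hx h => hyU ?_]
      · exact h.elim (fun h => (hWUV (hZW x hx h)).1) fun h => (hcylC x hx h).1
      · exact h.elim (fun h => (hγUV x hx).elim (fun hU => .inl (hU h)) fun hV => .inr (hV h))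
          fun h => .inl (hWUV (hZW x hx h)).1
  convert G.mul_mem (G.inv_mem (G.mul_mem hrP.1 hsP.1)) (hGV hτ) using 1
  group

lemma exists_mem_localGroup_forall_notMem_apply (hA : MatrixIrreducible A)
    {R W : Set (ShiftSpace A)} (hR : IsOpen R) (hRne : R.Nonempty) (hW : IsOpen W)
    (hWne : W.Nonempty) (hRW : Disjoint R W) :
    ∃ g ∈ localGroup A (R ∪ W),
      ∃ W₀ ⊆ W, IsClopen W₀ ∧ W₀.Nonempty ∧ ∀ y ∉ R, g y ∉ W₀ := by
  obtain ⟨z, hz⟩ := hRne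
  obtain ⟨a₀, ha₀⟩ := exists_cylinder_subset hR hz
  have ha : 1 ≤ max a₀ 1 := le_max_right _ _
  have hzR : cylinder z (max a₀ 1) ⊆ R := (cylinder_anti z (le_max_left _ _)).trans ha₀
  obtain ⟨t, q, hq, htW, htlast⟩ :=
    exists_cylinder_subset_last_eq hA hW hWne (z.1 (max a₀ 1 - 1))
  have hdisj := hRW.mono hzR htW
  refine ⟨_, localGroup_mono (union_subset_union hzR htW)
    (cylinderSwap_mem_localGroup ha hq htlast.symm hdisj), cylinder t q, htW,
    isClopen_cylinder t q, ⟨t, mem_cylinder_self t q⟩, fun y hy hgy => ?_⟩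
  rw [cylinderSwap_apply] at hgy
  by_cases ht : y ∈ cylinder t q
  · rw [cylinderSwapFun_of_mem_right hdisj ht] at hgy
    exact hdisj.notMem_of_mem_left
      (splice_mem_cylinder ha (htlast ▸ adj_of_mem_cylinder ht hq)) hgy
  · rw [cylinderSwapFun_of_notMem (fun h => hy (hzR h)) ht] at hgy
    exact ht hgy

lemma exists_mem_localGroup_union_forall_notMem_apply (hA : MatrixIrreducible A)
    {U V : Set (ShiftSpace A)} (hU : IsClopen U) (hV : IsClopen V) (hUV : (U ∩ V).Nonempty)
    {G : Subgroup (ShiftSpace A ≃ₜ ShiftSpace A)} (hGU : localGroup A U ≤ G)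
    (hGV : localGroup A V ≤ G) {R : Set (ShiftSpace A)} (hR : IsClopen R) (hRne : R.Nonempty)
    (hRUV : R ⊆ U ∪ V) : ∃ g ∈ G, g ∈ localGroup A (U ∪ V) ∧
      ∃ W ⊆ U ∩ V, IsClopen W ∧ W.Nonempty ∧ ∀ y ∉ R, g y ∉ W := by
  by_cases hmeet : (R ∩ (U ∩ V)).Nonempty
  · exact ⟨1, G.one_mem, (localGroup A _).one_mem, R ∩ (U ∩ V), inter_subset_right,
      hR.inter (hU.inter hV), hmeet, fun y hy h => hy h.1⟩
  obtain ⟨P, hP, hGP, hUVP, hPUV, hRP⟩ : ∃ P, IsClopen P ∧ localGroup A P ≤ G ∧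
      U ∩ V ⊆ P ∧ P ⊆ U ∪ V ∧ (R ∩ P).Nonempty := by
    by_cases hRU : (R ∩ U).Nonempty
    · exact ⟨U, hU, hGU, inter_subset_left, subset_union_left, hRU⟩
    · refine ⟨V, hV, hGV, inter_subset_right, subset_union_right, ?_⟩
      obtain ⟨y, hy⟩ := hRne
      exact ⟨y, hy, (hRUV hy).resolve_left fun h => hRU ⟨y, hy, h⟩⟩
  obtain ⟨g, hg, W, hW⟩ := exists_mem_localGroup_forall_notMem_apply hA (hR.inter hP).isOpen hRP
    (hU.inter hV).isOpen hUV (disjoint_left.2 fun y hy h => hmeet ⟨y, hy.1, h⟩)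
  have hsub : R ∩ P ∪ U ∩ V ⊆ P := union_subset inter_subset_right hUVP
  exact ⟨g, hGP (localGroup_mono hsub hg), localGroup_mono (hsub.trans hPUV) hg, W, hW.1,
    hW.2.1, hW.2.2.1, fun y hy => hW.2.2.2 y fun h => hy h.1⟩

lemma localGroup_union_le (hA : MatrixIrreducible A) (hI : ConditionI A)
    {U V : Set (ShiftSpace A)} (hU : IsClopen U) (hV : IsClopen V) (hUV : (U ∩ V).Nonempty)
    {G : Subgroup (ShiftSpace A ≃ₜ ShiftSpace A)} (hGU : localGroup A U ≤ G)
    (hGV : localGroup A V ≤ G) : localGroup A (U ∪ V) ≤ G := by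
  intro γ hγ
  obtain ⟨g, hgG, hg, W, hWUV, hW, hWne, hgW⟩ :=
    exists_mem_localGroup_union_forall_notMem_apply hA hU hV hUV hGU hGV
      (isClopen_image_homeomorph γ hV) ((hUV.mono inter_subset_right).image γ)
      (image_subset_iff.2 fun v hv => mapsTo_of_fixes_compl hγ.2 (.inr hv))
  have hgγ : g * γ ∈ G := mem_of_forall_apply_notMem hA hI hU hV hGU hGV (mul_mem hg hγ) hW
    hWne hWUV fun x hx => hgW _ fun h => hx.2 (γ.injective.mem_set_image.1 h)
  convert G.mul_mem (G.inv_mem hgG) hgγ using 1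
  group

end ShiftSpace

theorem stmt12_general {N : ℕ} (A : Fin N → Fin N → Bool)
    (hA : MatrixIrreducible A) (hI : ConditionI A)
    (O : Set (ShiftSpace A)) (hO : IsClopen O)
    (η : ShiftSpace A ≃ₜ ShiftSpace A) (hη : η ∈ fullGroup A)
    (h1 : ((η '' O) ∩ Oᶜ).Nonempty) (h2 : ((η '' Oᶜ) ∩ Oᶜ).Nonempty) :
    Subgroup.closure (↑(localGroup A O) ∪ ↑(localGroup A Oᶜ) ∪ {η}) = fullGroup A := by
  set G := Subgroup.closure (↑(localGroup A O) ∪ ↑(localGroup A Oᶜ) ∪ {η})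
  refine le_antisymm ((Subgroup.closure_le _).2 ?_) fun γ hγ => ?_
  · rintro θ ((hθ | hθ) | rfl)
    exacts [hθ.1, hθ.1, hη]
  have hηG : η ∈ G := Subgroup.subset_closure (.inr rfl)
  have hGO : localGroup A O ≤ G := fun θ hθ => Subgroup.subset_closure (.inl (.inl hθ))
  have hGOc : localGroup A Oᶜ ≤ G := fun θ hθ => Subgroup.subset_closure (.inl (.inr hθ))
  have hηO := isClopen_image_homeomorph η hO
  have hηOc := isClopen_image_homeomorph η hO.compl
  have hcover : η '' O ∪ Oᶜ ∪ η '' Oᶜ = univ := by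
    rw [union_right_comm, ← image_union, union_compl_self, image_univ_of_surjective η.surjective,
      univ_union]
  have hstep := ShiftSpace.localGroup_union_le hA hI hηO hO.compl h1
    (ShiftSpace.localGroup_image_le hη hηG hGO) hGOc
  obtain ⟨x, hxη, hxO⟩ := h2
  refine ShiftSpace.localGroup_union_le hA hI (hηO.union hO.compl) hηOc ⟨x, .inr hxO, hxη⟩
    hstep (ShiftSpace.localGroup_image_le hη hηG hGOc) ⟨hγ, fun y hy => ?_⟩
  exact absurd (hcover ▸ mem_univ y) hy

theorem stmt12 {N : ℕ} (hN : 1 < N) (A : Fin N → Fin N → Bool)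
    (hA : MatrixIrreducible A) (hI : ConditionI A)
    (O : Set (ShiftSpace A)) (hO : IsClopen O)
    (η : ShiftSpace A ≃ₜ ShiftSpace A) (hη : η ∈ fullGroup A)
    (h1 : ((η '' O) ∩ Oᶜ).Nonempty) (h2 : ((η '' Oᶜ) ∩ Oᶜ).Nonempty) :
    Subgroup.closure (↑(localGroup A O) ∪ ↑(localGroup A Oᶜ) ∪ {η}) = fullGroup A :=
  stmt12_general A hA hI O hO η hη h1 h2
end

section
/- Let E ⊆ X_A be a nonempty closed set such that γ(E) ⊆ E for every γ ∈ Γ_A. Then E = X_A; that is, the action of the continuous full group Γ_A on X_A is minimal. -/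
open Set

namespace Stmt13Aux

variable {N : ℕ} {A : Fin N → Fin N → Bool}

lemma iterate_shift (x : ShiftSpace A) (k n : ℕ) :
    ((shiftMap A)^[k] x).1 n = x.1 (n + k) := by
  induction k generalizing x n with
  | zero => rfl
  | succ k ih => rw [Function.iterate_succ_apply, ih]; rfl

def cyl (u : ShiftSpace A) (p : ℕ) : Set (ShiftSpace A) := {x | ∀ i ≤ p, x.1 i = u.1 i}

lemma self_mem_cyl (u : ShiftSpace A) (p : ℕ) : u ∈ cyl u p := fun _ _ => rfl

lemma isClopen_cyl (u : ShiftSpace A) (p : ℕ) : IsClopen (cyl u p) := by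
  have h : cyl u p = ⋂ i ∈ Finset.range (p+1),
      (fun x : ShiftSpace A => x.1 i) ⁻¹' {u.1 i} := by
    ext x; simp [cyl, Nat.lt_succ_iff]
  rw [h]
  exact Set.Finite.isClopen_biInter (Finset.range (p+1)).finite_toSet (fun i _ =>
    (isClopen_discrete {u.1 i}).preimage ((continuous_apply i).comp continuous_subtype_val))

def spliceSeq (v : ℕ → Fin N) (q p : ℕ) (x : ℕ → Fin N) : ℕ → Fin N :=
  fun i => if i ≤ q then v i else x (i - q + p)

lemma spliceSeq_adm (v : ShiftSpace A) (q p : ℕ) (x : ShiftSpace A) (h : x.1 p = v.1 q) :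
    ∀ n, A (spliceSeq v.1 q p x.1 n) (spliceSeq v.1 q p x.1 (n+1)) = true := by
  intro n
  unfold spliceSeq
  rcases lt_trichotomy n q with h1 | rfl | h1
  · rw [if_pos h1.le, if_pos (by omega : n + 1 ≤ q)]; exact v.2 n
  · rw [if_pos le_rfl, if_neg (by omega)]
    have he : n + 1 - n + p = p + 1 := by omega
    rw [he, ← h]
    exact x.2 p
  · rw [if_neg (by omega), if_neg (by omega)]
    have h2 : n + 1 - q + p = (n - q + p) + 1 := by omega
    rw [h2]; exact x.2 _

def spliceFun (v : ShiftSpace A) (q p : ℕ) (x : ShiftSpace A) : ShiftSpace A :=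
  if h : x.1 p = v.1 q then ⟨spliceSeq v.1 q p x.1, spliceSeq_adm v q p x h⟩ else x

lemma continuous_spliceFun (v : ShiftSpace A) (q p : ℕ) :
    Continuous (spliceFun v q p : ShiftSpace A → ShiftSpace A) := by
  classical
  have hT : IsClopen {x : ShiftSpace A | x.1 p = v.1 q} :=
    (isClopen_discrete {v.1 q}).preimage ((continuous_apply p).comp continuous_subtype_val)
  apply continuous_induced_rng.mpr
  have heq : (Subtype.val ∘ spliceFun v q p) =
      ({x : ShiftSpace A | x.1 p = v.1 q}).piecewise
        (fun x => spliceSeq v.1 q p x.1) Subtype.val := by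
    funext x
    by_cases h : x.1 p = v.1 q
    · simp [Function.comp, spliceFun, dif_pos h, Set.piecewise, h]
    · simp [Function.comp, spliceFun, dif_neg h, Set.piecewise, h]
  rw [heq]
  refine Continuous.piecewise (by simp [hT.frontier_eq]) ?_ continuous_subtype_val
  apply continuous_pi
  intro i
  unfold spliceSeq
  by_cases h : i ≤ q
  · simp only [if_pos h]; exact continuous_const
  · simp only [if_neg h]; exact (continuous_apply _).comp continuous_subtype_val

lemma spliceFun_apply (u v : ShiftSpace A) (q p : ℕ) (huv : u.1 p = v.1 q) {x : ShiftSpace A}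
    (hx : x ∈ cyl u p) :
    (spliceFun v q p x).1 = spliceSeq v.1 q p x.1 := by
  have h : x.1 p = v.1 q := (hx p le_rfl).trans huv
  simp [spliceFun, dif_pos h]

lemma spliceFun_mem (u v : ShiftSpace A) (q p : ℕ) (huv : u.1 p = v.1 q) {x : ShiftSpace A}
    (hx : x ∈ cyl u p) : spliceFun v q p x ∈ cyl v q := by
  intro i hi
  rw [spliceFun_apply u v q p huv hx]
  simp [spliceSeq, if_pos hi]

lemma splice_splice (u v : ShiftSpace A) (q p : ℕ) (huv : u.1 p = v.1 q) {x : ShiftSpace A}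
    (hx : x ∈ cyl u p) :
    spliceFun u p q (spliceFun v q p x) = x := by
  apply Subtype.ext
  rw [spliceFun_apply v u p q huv.symm (spliceFun_mem u v q p huv hx),
    spliceFun_apply u v q p huv hx]
  funext i
  unfold spliceSeq
  by_cases h : i ≤ p
  · rw [if_pos h]; exact (hx i h).symm
  · rw [if_neg h, if_neg (by omega)]
    have he : i - p + q - q + p = i := by omega
    rw [he]





open Classical

noncomputable def swapFun (u v : ShiftSpace A) (q p : ℕ) : ShiftSpace A → ShiftSpace A :=
  (cyl u p).piecewise (spliceFun v q p)
    ((cyl v q).piecewise (spliceFun u p q) id)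

lemma swapFun_eq_of_mem_left (u v : ShiftSpace A) (q p : ℕ) {x : ShiftSpace A}
    (hx : x ∈ cyl u p) : swapFun u v q p x = spliceFun v q p x := by
  simp [swapFun, Set.piecewise_eq_of_mem _ _ _ hx]

lemma swapFun_eq_of_mem_right (u v : ShiftSpace A) (q p : ℕ) {x : ShiftSpace A}
    (hx1 : x ∉ cyl u p) (hx2 : x ∈ cyl v q) : swapFun u v q p x = spliceFun u p q x := by
  simp [swapFun, Set.piecewise_eq_of_notMem _ _ _ hx1, Set.piecewise_eq_of_mem _ _ _ hx2]

lemma swapFun_eq_of_notMem (u v : ShiftSpace A) (q p : ℕ) {x : ShiftSpace A}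
    (hx1 : x ∉ cyl u p) (hx2 : x ∉ cyl v q) : swapFun u v q p x = x := by
  simp [swapFun, Set.piecewise_eq_of_notMem _ _ _ hx1, Set.piecewise_eq_of_notMem _ _ _ hx2]

lemma swapFun_invol (u v : ShiftSpace A) (q p : ℕ) (huv : u.1 p = v.1 q)
    (hdis : Disjoint (cyl u p) (cyl v q)) (x : ShiftSpace A) :
    swapFun u v q p (swapFun u v q p x) = x := by
  by_cases h1 : x ∈ cyl u p
  · have hy : spliceFun v q p x ∈ cyl v q := spliceFun_mem u v q p huv h1
    have hy' : spliceFun v q p x ∉ cyl u p := fun hc => Set.disjoint_left.mp hdis hc hy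
    rw [swapFun_eq_of_mem_left u v q p h1, swapFun_eq_of_mem_right u v q p hy' hy,
      splice_splice u v q p huv h1]
  · by_cases h2 : x ∈ cyl v q
    · have hy : spliceFun u p q x ∈ cyl u p := spliceFun_mem v u p q huv.symm h2
      have hy' : spliceFun u p q x ∉ cyl v q := fun hc => Set.disjoint_right.mp hdis hc hy
      rw [swapFun_eq_of_mem_right u v q p h1 h2, swapFun_eq_of_mem_left u v q p hy,
        splice_splice v u p q huv.symm h2]
    · rw [swapFun_eq_of_notMem u v q p h1 h2, swapFun_eq_of_notMem u v q p h1 h2]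

lemma continuous_swapFun (u v : ShiftSpace A) (q p : ℕ) :
    Continuous (swapFun u v q p) := by
  refine Continuous.piecewise (by simp [(isClopen_cyl u p).frontier_eq])
    (continuous_spliceFun v q p) ?_
  exact Continuous.piecewise (by simp [(isClopen_cyl v q).frontier_eq])
    (continuous_spliceFun u p q) continuous_id

noncomputable def swapHomeo (u v : ShiftSpace A) (q p : ℕ) (huv : u.1 p = v.1 q)
    (hdis : Disjoint (cyl u p) (cyl v q)) : ShiftSpace A ≃ₜ ShiftSpace A where
  toFun := swapFun u v q p
  invFun := swapFun u v q p
  left_inv := swapFun_invol u v q p huv hdis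
  right_inv := swapFun_invol u v q p huv hdis
  continuous_toFun := continuous_swapFun u v q p
  continuous_invFun := continuous_swapFun u v q p

lemma swapHomeo_mem (u v : ShiftSpace A) (q p : ℕ) (huv : u.1 p = v.1 q)
    (hdis : Disjoint (cyl u p) (cyl v q)) :
    swapHomeo u v q p huv hdis ∈ fullGroup A := by
  refine ⟨(cyl u p).piecewise (fun _ => q+1) ((cyl v q).piecewise (fun _ => p+1) (fun _ => 0)),
          (cyl u p).piecewise (fun _ => p+1) ((cyl v q).piecewise (fun _ => q+1) (fun _ => 0)),
          ?_, ?_, ?_⟩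
  · refine Continuous.piecewise (by simp [(isClopen_cyl u p).frontier_eq]) continuous_const ?_
    exact Continuous.piecewise (by simp [(isClopen_cyl v q).frontier_eq]) continuous_const
      continuous_const
  · refine Continuous.piecewise (by simp [(isClopen_cyl u p).frontier_eq]) continuous_const ?_
    exact Continuous.piecewise (by simp [(isClopen_cyl v q).frontier_eq]) continuous_const
      continuous_const
  · intro x
    by_cases h1 : x ∈ cyl u p
    · rw [Set.piecewise_eq_of_mem _ _ _ h1, Set.piecewise_eq_of_mem _ _ _ h1]
      apply Subtype.ext
      funext n
      rw [iterate_shift, iterate_shift]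
      show (swapFun u v q p x).1 (n + (q+1)) = x.1 (n + (p+1))
      rw [swapFun_eq_of_mem_left u v q p h1, spliceFun_apply u v q p huv h1]
      unfold spliceSeq
      rw [if_neg (by omega), show n + (q+1) - q + p = n + (p+1) by omega]
    · by_cases h2 : x ∈ cyl v q
      · rw [Set.piecewise_eq_of_notMem _ _ _ h1, Set.piecewise_eq_of_notMem _ _ _ h1,
          Set.piecewise_eq_of_mem _ _ _ h2, Set.piecewise_eq_of_mem _ _ _ h2]
        apply Subtype.ext
        funext n
        rw [iterate_shift, iterate_shift]
        show (swapFun u v q p x).1 (n + (p+1)) = x.1 (n + (q+1))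
        rw [swapFun_eq_of_mem_right u v q p h1 h2, spliceFun_apply v u p q huv.symm h2]
        unfold spliceSeq
        rw [if_neg (by omega), show n + (p+1) - p + q = n + (q+1) by omega]
      · rw [Set.piecewise_eq_of_notMem _ _ _ h1, Set.piecewise_eq_of_notMem _ _ _ h1,
          Set.piecewise_eq_of_notMem _ _ _ h2, Set.piecewise_eq_of_notMem _ _ _ h2]
        show (shiftMap A)^[0] (swapFun u v q p x) = (shiftMap A)^[0] x
        rw [swapFun_eq_of_notMem u v q p h1 h2]

end Stmt13Aux


theorem stmt13 {N : ℕ} (hN : 1 < N) (A : Fin N → Fin N → Bool)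
    (hA : MatrixIrreducible A) (hI : ConditionI A)
    (E : Set (ShiftSpace A)) (hE : IsClosed E) (hEne : E.Nonempty)
    (hinv : ∀ γ ∈ fullGroup A, γ '' E ⊆ E) :
    E = Set.univ := by
  open Stmt13Aux in
  apply Set.eq_univ_iff_forall.mpr
  intro y
  obtain ⟨x, hx⟩ := hEne
  have key : ∀ n : ℕ, ∃ z ∈ E, ∀ i ≤ n, z.1 i = y.1 i := by
    intro n
    by_cases hxy : ∀ i ≤ n, x.1 i = y.1 i
    · exact ⟨x, hx, hxy⟩
    push_neg at hxy
    obtain ⟨i0, hi0, hne⟩ := hxy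
    choose L hLpos w hw0 hwL hwedge using fun a : Fin N => hA (y.1 n) a
    set M := Finset.univ.sup L with hM
    set m := n + M + 1 with hm
    set a := x.1 m with ha
    have hLM : L a ≤ M := Finset.le_sup (Finset.mem_univ a)
    have hLa : 0 < L a := hLpos a
    set q := n + L a with hq
    have hqm : q < m := by omega
    set vseq : ℕ → Fin N := fun i =>
      if i ≤ n then y.1 i else if i ≤ q then w a (i - n) else x.1 (i - q + m) with hvseq
    have vadm : ∀ i, A (vseq i) (vseq (i+1)) = true := by
      intro i
      rw [hvseq]
      simp only []
      rcases lt_trichotomy i n with h1 | heq | h1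
      · rw [if_pos h1.le, if_pos (by omega : i + 1 ≤ n)]
        exact y.2 i
      · rw [if_pos (le_of_eq heq), if_neg (by omega), if_pos (by omega : i + 1 ≤ q),
          show i + 1 - n = 1 by omega, heq, ← hw0 a]
        exact hwedge a 0 (hLpos a)
      · rw [if_neg (by omega)]
        rcases lt_trichotomy i q with h2 | heq | h2
        · rw [if_pos h2.le, if_neg (by omega), if_pos (by omega : i + 1 ≤ q),
            show i + 1 - n = (i - n) + 1 by omega]
          exact hwedge a (i - n) (by omega)
        · rw [if_pos (le_of_eq heq), if_neg (by omega), if_neg (by omega),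
            show i - n = L a by omega, hwL a, show i + 1 - q + m = m + 1 by omega, ha]
          exact x.2 m
        · rw [if_neg (by omega), if_neg (by omega), if_neg (by omega),
            show i + 1 - q + m = (i - q + m) + 1 by omega]
          exact x.2 _
    set v : ShiftSpace A := ⟨vseq, vadm⟩ with hv
    have huv : x.1 m = v.1 q := by
      show x.1 m = vseq q
      rw [hvseq]
      simp only []
      rw [if_neg (by omega), if_pos le_rfl, show q - n = L a by omega, hwL a, ha]
    have hdis : Disjoint (cyl x m) (cyl v q) := by
      rw [Set.disjoint_left]
      intro z hz1 hz2
      apply hne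
      have e1 : z.1 i0 = x.1 i0 := hz1 i0 (by omega)
      have e2 : z.1 i0 = vseq i0 := hz2 i0 (by omega)
      rw [← e1, e2, hvseq]
      simp only []
      rw [if_pos hi0]
    set γ := swapHomeo x v q m huv hdis with hγ
    have hxmem : x ∈ cyl x m := self_mem_cyl x m
    refine ⟨γ x, hinv γ (swapHomeo_mem x v q m huv hdis) ⟨x, hx, rfl⟩, ?_⟩
    intro i hi
    have hg : (γ x).1 = spliceSeq v.1 q m x.1 := by
      show (swapFun x v q m x).1 = _
      rw [swapFun_eq_of_mem_left x v q m hxmem, spliceFun_apply x v q m huv hxmem]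
    rw [hg]
    unfold spliceSeq
    rw [if_pos (by omega : i ≤ q)]
    show vseq i = y.1 i
    rw [hvseq]
    simp only []
    rw [if_pos hi]
  have hyc : y ∈ closure E := by
    rw [mem_closure_iff_seq_limit]
    choose z hzE hz using key
    refine ⟨z, hzE, ?_⟩
    rw [tendsto_subtype_rng, tendsto_pi_nhds]
    intro i
    apply Filter.Tendsto.congr' _ (tendsto_const_nhds (x := y.1 i))
    filter_upwards [Filter.eventually_ge_atTop i] with n hn
    exact (hz n i hn).symm
  rwa [hE.closure_eq] at hyc
end

section
/- Let U, V ⊆ X_A be clopen sets with V \ U nonempty. Then there exist a finite clopen partition U = U₁ ⊔ ⋯ ⊔ U_n and involutions α₁,…,α_n ∈ Γ_A such that α_i(U_i) ⊆ V \ U, the images α_i(U_i) are pairwise disjoint, α_i² = id, and each α_i is the identity outside U_i ∪ α_i(U_i). -/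
open Set

section Dev
variable {N : ℕ} (A : Fin N → Fin N → Bool)

/-- Cylinder set of the word `w` (first `p` letters of `w`). -/
def Cyl (w : ℕ → Fin N) (p : ℕ) : Set (ShiftSpace A) := {x | ∀ k < p, x.1 k = w k}

lemma isClosed_shiftSpace :
    IsClosed {x : ℕ → Fin N | ∀ n, A (x n) (x (n + 1)) = true} := by
  have : {x : ℕ → Fin N | ∀ n, A (x n) (x (n + 1)) = true} =
      ⋂ n, (fun x : ℕ → Fin N => (x n, x (n + 1))) ⁻¹' {p | A p.1 p.2 = true} := by
    ext x; simp
  rw [this]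
  exact isClosed_iInter fun n =>
    (isClosed_discrete _).preimage ((continuous_apply n).prodMk (continuous_apply (n + 1)))

instance : CompactSpace (ShiftSpace A) :=
  isCompact_iff_compactSpace.mp (isClosed_shiftSpace A).isCompact

lemma isClopen_cyl (w : ℕ → Fin N) (p : ℕ) : IsClopen (Cyl A w p) := by
  have : Cyl A w p = ⋂ k ∈ Finset.range p, {x : ShiftSpace A | x.1 k = w k} := by
    ext x; simp [Cyl]
  rw [this]
  refine (Finset.range p).finite_toSet.isClopen_biInter fun k _ => ?_
  exact (isClopen_discrete {w k}).preimage ((continuous_apply k).comp continuous_subtype_val)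

lemma mem_cyl_self (x : ShiftSpace A) (p : ℕ) : x ∈ Cyl A x.1 p := fun _ _ => rfl

lemma cyl_mono (w : ℕ → Fin N) {p q : ℕ} (h : p ≤ q) : Cyl A w q ⊆ Cyl A w p :=
  fun _ hx k hk => hx k (lt_of_lt_of_le hk h)

/-- Every clopen set is saturated at some finite depth. -/
lemma clopen_saturated {U : Set (ShiftSpace A)} (hU : IsClopen U) :
    ∃ m, 1 ≤ m ∧ ∀ x ∈ U, ∀ y : ShiftSpace A, (∀ k < m, y.1 k = x.1 k) → y ∈ U := by
  set s : Set (ShiftSpace A × ShiftSpace A) := U ×ˢ Uᶜ with hs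
  have hscomp : IsCompact s := (hU.isClosed.isCompact).prod (hU.compl.isClosed.isCompact)
  set t : ℕ → Set (ShiftSpace A × ShiftSpace A) :=
    fun m => {pr | ∀ k < m, pr.1.1 k = pr.2.1 k} with ht
  have htc : ∀ m, IsClosed (t m) := by
    intro m
    have : t m = ⋂ k ∈ Finset.range m, {pr : ShiftSpace A × ShiftSpace A | pr.1.1 k = pr.2.1 k} := by
      ext pr; simp [ht]
    rw [this]
    refine isClosed_biInter fun k _ => isClosed_eq ?_ ?_
    · exact (continuous_apply k).comp (continuous_subtype_val.comp continuous_fst)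
    · exact (continuous_apply k).comp (continuous_subtype_val.comp continuous_snd)
  have hempty : s ∩ ⋂ m, t m = ∅ := by
    ext ⟨x, y⟩
    simp only [Set.mem_inter_iff, Set.mem_iInter, Set.mem_empty_iff_false, iff_false, hs, ht,
      Set.mem_prod, Set.mem_compl_iff, Set.mem_setOf_eq]
    rintro ⟨⟨hx, hy⟩, h⟩
    apply hy
    have : x = y := Subtype.ext (funext fun k => h (k + 1) k (Nat.lt_succ_self k))
    rwa [← this]
  have hdir : Directed (fun a b => a ⊇ b) t := fun m m' =>
    ⟨max m m', fun pr hpr k hk => hpr k (hk.trans_le (le_max_left _ _)),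
      fun pr hpr k hk => hpr k (hk.trans_le (le_max_right _ _))⟩
  obtain ⟨m, hm⟩ := hscomp.elim_directed_family_closed t htc hempty hdir
  refine ⟨max m 1, le_max_right _ _, fun x hx y hy => ?_⟩
  by_contra hyU
  have : (x, y) ∈ s ∩ t m :=
    ⟨⟨hx, hyU⟩, fun k hk => (hy k (hk.trans_le (le_max_left _ _))).symm⟩
  rw [hm] at this
  exact this

end Dev
section Dev2
variable {N : ℕ} (A : Fin N → Fin N → Bool)

lemma cantor_singleton_not_open (z : ℕ → Bool) : ¬ IsOpen ({z} : Set (ℕ → Bool)) := by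
  intro h
  obtain ⟨I, u, hu, hsub⟩ := isOpen_pi_iff.mp h z rfl
  obtain ⟨k, hk⟩ := Infinite.exists_notMem_finset I
  have hy : Function.update z k (!z k) ∈ (I : Set ℕ).pi u := by
    intro i hi
    rw [Function.update_of_ne (by rintro rfl; exact hk hi)]
    exact (hu i hi).2
  have := hsub hy
  simp only [Set.mem_singleton_iff] at this
  have := congrFun this k
  rw [Function.update_self] at this
  exact (Bool.not_ne_self (z k)) this

lemma exists_ne_of_isOpen (hI : ConditionI A) {S : Set (ShiftSpace A)} (hS : IsOpen S)
    {u : ShiftSpace A} (hu : u ∈ S) : ∃ v ∈ S, v ≠ u := by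
  by_contra h
  push_neg at h
  have hsing : S = {u} := Set.eq_singleton_iff_unique_mem.mpr ⟨hu, h⟩
  obtain ⟨e⟩ := hI
  have : IsOpen (e '' {u}) := e.isOpen_image.mpr (hsing ▸ hS)
  rw [Set.image_singleton] at this
  exact cantor_singleton_not_open (e u) this

/-- Inside any nonempty clopen set one can find `n` pairwise disjoint cylinders. -/
lemma exists_disjoint_cyls (hI : ConditionI A) (n : ℕ) :
    ∀ S : Set (ShiftSpace A), IsClopen S → S.Nonempty →
    ∃ m, 1 ≤ m ∧ ∃ x : Fin n → ShiftSpace A,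
      (∀ i, Cyl A (x i).1 m ⊆ S) ∧
      (∀ i j, i ≠ j → ∃ k < m, (x i).1 k ≠ (x j).1 k) := by
  induction n with
  | zero =>
    intro S _ _
    exact ⟨1, le_refl 1, Fin.elim0, fun i => i.elim0, fun i => i.elim0⟩
  | succ n ih =>
    intro S hS hne
    obtain ⟨m₀, hm₀1, hsat⟩ := clopen_saturated A hS
    obtain ⟨u, hu⟩ := hne
    obtain ⟨v, hv, hvu⟩ := exists_ne_of_isOpen A hI hS.isOpen hu
    have hk₀ : ∃ k₀, u.1 k₀ ≠ v.1 k₀ := by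
      by_contra h
      push_neg at h
      exact hvu (Subtype.ext (funext fun k => (h k).symm))
    obtain ⟨k₀, hk₀⟩ := hk₀
    set m₁ := max m₀ (k₀ + 1) with hm₁
    have hCu : Cyl A u.1 m₁ ⊆ S := fun y hy =>
      hsat u hu y fun k hk => hy k (hk.trans_le (le_max_left _ _))
    have hCv : Cyl A v.1 m₁ ⊆ S := fun y hy =>
      hsat v hv y fun k hk => hy k (hk.trans_le (le_max_left _ _))
    obtain ⟨m, hm1, x, hxsub, hxdisj⟩ :=
      ih (Cyl A v.1 m₁) (isClopen_cyl A v.1 m₁) ⟨v, mem_cyl_self A v m₁⟩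
    refine ⟨max m m₁, le_trans hm1 (le_max_left _ _),
      Fin.cons u x, ?_, ?_⟩
    · intro i
      refine Fin.cases ?_ ?_ i
      · exact (cyl_mono A u.1 (le_max_right _ _)).trans hCu
      · intro j
        simp only [Fin.cons_succ]
        exact ((cyl_mono A (x j).1 (le_max_left _ _)).trans (hxsub j)).trans hCv
    · intro i j hij
      have key : ∀ j : Fin n, ∃ k < max m m₁, u.1 k ≠ (x j).1 k := by
        intro j
        refine ⟨k₀, lt_of_lt_of_le (lt_of_lt_of_le (Nat.lt_succ_self k₀)
          (le_max_right m₀ _)) (le_max_right m m₁), ?_⟩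
        have : (x j).1 k₀ = v.1 k₀ := by
          have hxj : x j ∈ Cyl A v.1 m₁ := hxsub j (mem_cyl_self A (x j) m)
          exact hxj k₀ (lt_of_lt_of_le (Nat.lt_succ_self k₀) (le_max_right m₀ _))
        rw [this]; exact hk₀
      revert hij
      refine Fin.cases ?_ ?_ i
      · refine Fin.cases ?_ ?_ j
        · intro h; exact absurd rfl h
        · intro j' _; simpa using key j'
      · intro i'
        refine Fin.cases ?_ ?_ j
        · intro _
          obtain ⟨k, hk, hne⟩ := key i'
          exact ⟨k, hk, by simpa using hne.symm⟩
        · intro j' hij'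
          obtain ⟨k, hk, hne⟩ := hxdisj i' j' (fun h => hij' (by rw [h]))
          exact ⟨k, lt_of_lt_of_le hk (le_max_left _ _), by simpa using hne⟩

end Dev2
section Dev3
variable {N : ℕ} (A : Fin N → Fin N → Bool)

/-- Replace the length-`a` prefix of `x` by the length-`b` word `w`. -/
def repl (w : ℕ → Fin N) (a b : ℕ) (x : ShiftSpace A) : ℕ → Fin N :=
  fun n => if n < b then w n else x.1 (n - b + a)

lemma repl_spec {μ ν : ℕ → Fin N} {p q : ℕ} (hp : 0 < p) (hq : 0 < q)
    (hν : ∀ k, k + 1 < q → A (ν k) (ν (k + 1)) = true)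
    (hlast : μ (p - 1) = ν (q - 1))
    {x : ShiftSpace A} (hx : x ∈ Cyl A μ p) :
    ∀ n, A (repl A ν p q x n) (repl A ν p q x (n + 1)) = true := by
  intro n
  rcases lt_trichotomy (n + 1) q with h1 | h2 | h3
  · have hn : n < q := (Nat.lt_succ_self n).trans h1
    simp only [repl, if_pos hn, if_pos h1]
    exact hν n h1
  · have hn : n < q := h2 ▸ Nat.lt_succ_self n
    have hn1 : ¬ (n + 1 < q) := by omega
    simp only [repl, if_pos hn, if_neg hn1]
    have he : n = q - 1 := by omega
    have hidx : n + 1 - q + p = p := by omega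
    rw [hidx, he, ← hlast]
    have hxp : x.1 (p - 1) = μ (p - 1) := hx (p - 1) (by omega)
    have := x.2 (p - 1)
    rw [Nat.sub_add_cancel hp] at this
    rw [← hxp]
    exact this
  · have hn : ¬ (n < q) := by omega
    have hn1 : ¬ (n + 1 < q) := by omega
    simp only [repl, if_neg hn, if_neg hn1]
    have hidx : n + 1 - q + p = (n - q + p) + 1 := by omega
    rw [hidx]
    exact x.2 (n - q + p)

open Classical in
/-- The swap of the cylinders `Cyl μ p`, `Cyl ν q`. -/
noncomputable def swapFun {μ ν : ℕ → Fin N} {p q : ℕ} (hp : 0 < p) (hq : 0 < q)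
    (hμ : ∀ k, k + 1 < p → A (μ k) (μ (k + 1)) = true)
    (hν : ∀ k, k + 1 < q → A (ν k) (ν (k + 1)) = true)
    (hlast : μ (p - 1) = ν (q - 1)) (x : ShiftSpace A) : ShiftSpace A :=
  if hx : x ∈ Cyl A μ p then ⟨repl A ν p q x, repl_spec A hp hq hν hlast hx⟩
  else if hx' : x ∈ Cyl A ν q then ⟨repl A μ q p x, repl_spec A hq hp hμ hlast.symm hx'⟩
  else x

variable {μ ν : ℕ → Fin N} {p q : ℕ} (hp : 0 < p) (hq : 0 < q)
    (hμ : ∀ k, k + 1 < p → A (μ k) (μ (k + 1)) = true)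
    (hν : ∀ k, k + 1 < q → A (ν k) (ν (k + 1)) = true)
    (hlast : μ (p - 1) = ν (q - 1))

lemma swapFun_val_of_mem₁ {x : ShiftSpace A} (hx : x ∈ Cyl A μ p) :
    (swapFun A hp hq hμ hν hlast x).1 = repl A ν p q x := by
  rw [swapFun, dif_pos hx]

lemma swapFun_val_of_mem₂ {x : ShiftSpace A} (hx : x ∈ Cyl A ν q)
    (hx' : x ∉ Cyl A μ p) :
    (swapFun A hp hq hμ hν hlast x).1 = repl A μ q p x := by
  rw [swapFun, dif_neg hx', dif_pos hx]

lemma swapFun_of_notMem {x : ShiftSpace A} (hx : x ∉ Cyl A μ p) (hx' : x ∉ Cyl A ν q) :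
    swapFun A hp hq hμ hν hlast x = x := by
  rw [swapFun, dif_neg hx, dif_neg hx']

lemma swapFun_mem₁ {x : ShiftSpace A} (hx : x ∈ Cyl A μ p) :
    swapFun A hp hq hμ hν hlast x ∈ Cyl A ν q := by
  intro k hk
  rw [swapFun_val_of_mem₁ A hp hq hμ hν hlast hx, repl, if_pos hk]

lemma swapFun_mem₂ {x : ShiftSpace A} (hx : x ∈ Cyl A ν q) (hx' : x ∉ Cyl A μ p) :
    swapFun A hp hq hμ hν hlast x ∈ Cyl A μ p := by
  intro k hk
  rw [swapFun_val_of_mem₂ A hp hq hμ hν hlast hx hx', repl, if_pos hk]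

lemma swapFun_invol (hdisj : ∀ x ∈ Cyl A μ p, x ∉ Cyl A ν q) (x : ShiftSpace A) :
    swapFun A hp hq hμ hν hlast (swapFun A hp hq hμ hν hlast x) = x := by
  by_cases hx : x ∈ Cyl A μ p
  · set y := swapFun A hp hq hμ hν hlast x with hy
    have hyv : y.1 = repl A ν p q x := swapFun_val_of_mem₁ A hp hq hμ hν hlast hx
    have hyq : y ∈ Cyl A ν q := swapFun_mem₁ A hp hq hμ hν hlast hx
    have hyp : y ∉ Cyl A μ p := fun h => hdisj y h hyq
    apply Subtype.ext
    rw [swapFun_val_of_mem₂ A hp hq hμ hν hlast hyq hyp]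
    funext n
    by_cases hn : n < p
    · simp only [repl, if_pos hn]
      exact (hx n hn).symm
    · simp only [repl, if_neg hn, hyv]
      have hge : ¬ (n - p + q < q) := by omega
      simp only [repl, if_neg hge]
      have : n - p + q - q + p = n := by omega
      rw [this]
  · by_cases hx' : x ∈ Cyl A ν q
    · set y := swapFun A hp hq hμ hν hlast x with hy
      have hyv : y.1 = repl A μ q p x := swapFun_val_of_mem₂ A hp hq hμ hν hlast hx' hx
      have hyp : y ∈ Cyl A μ p := swapFun_mem₂ A hp hq hμ hν hlast hx' hx
      apply Subtype.ext
      rw [swapFun_val_of_mem₁ A hp hq hμ hν hlast hyp]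
      funext n
      by_cases hn : n < q
      · simp only [repl, if_pos hn]
        exact (hx' n hn).symm
      · simp only [repl, if_neg hn, hyv]
        have hge : ¬ (n - q + p < p) := by omega
        simp only [repl, if_neg hge]
        have : n - q + p - p + q = n := by omega
        rw [this]
    · rw [swapFun_of_notMem A hp hq hμ hν hlast hx hx',
        swapFun_of_notMem A hp hq hμ hν hlast hx hx']

lemma continuous_repl (w : ℕ → Fin N) (a b : ℕ) :
    Continuous (fun x : ShiftSpace A => repl A w a b x) := by
  apply continuous_pi
  intro n
  by_cases h : n < b
  · simp only [repl, if_pos h]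
    exact continuous_const
  · simp only [repl, if_neg h]
    exact (continuous_apply (n - b + a)).comp continuous_subtype_val

open Classical in
lemma continuous_swapFun : Continuous (swapFun A hp hq hμ hν hlast) := by
  rw [continuous_induced_rng]
  have heq : (Subtype.val ∘ swapFun A hp hq hμ hν hlast) = fun x =>
      if x ∈ Cyl A μ p then repl A ν p q x
      else if x ∈ Cyl A ν q then repl A μ q p x else x.1 := by
    funext x
    simp only [Function.comp_apply, swapFun]
    split_ifs <;> rfl
  rw [heq]
  have hfr1 : frontier {x : ShiftSpace A | x ∈ Cyl A μ p} = ∅ := by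
    rw [Set.setOf_mem_eq]; exact (isClopen_cyl A μ p).frontier_eq
  have hfr2 : frontier {x : ShiftSpace A | x ∈ Cyl A ν q} = ∅ := by
    rw [Set.setOf_mem_eq]; exact (isClopen_cyl A ν q).frontier_eq
  refine Continuous.if ?_ (continuous_repl A ν p q) ?_
  · intro a ha; rw [hfr1] at ha; exact absurd ha (Set.notMem_empty a)
  refine Continuous.if ?_ (continuous_repl A μ q p) continuous_subtype_val
  · intro a ha; rw [hfr2] at ha; exact absurd ha (Set.notMem_empty a)

lemma shift_iter_s18 (y : ShiftSpace A) (t n : ℕ) :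
    ((shiftMap A)^[t] y).1 n = y.1 (n + t) := by
  induction t generalizing y with
  | zero => rfl
  | succ t ih =>
    rw [Function.iterate_succ_apply]
    exact ih (shiftMap A y)

open Classical in
lemma swapFun_fullGroup_key :
    ∃ k l : ShiftSpace A → ℕ, Continuous k ∧ Continuous l ∧
      ∀ x, (shiftMap A)^[k x] (swapFun A hp hq hμ hν hlast x) = (shiftMap A)^[l x] x := by
  refine ⟨fun x => if x ∈ Cyl A μ p then q else if x ∈ Cyl A ν q then p else 0,
    fun x => if x ∈ Cyl A μ p then p else if x ∈ Cyl A ν q then q else 0, ?_, ?_, ?_⟩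
  · refine Continuous.if ?_ continuous_const (Continuous.if ?_ continuous_const continuous_const)
    · intro a ha
      rw [Set.setOf_mem_eq, (isClopen_cyl A μ p).frontier_eq] at ha
      exact absurd ha (Set.notMem_empty a)
    · intro a ha
      rw [Set.setOf_mem_eq, (isClopen_cyl A ν q).frontier_eq] at ha
      exact absurd ha (Set.notMem_empty a)
  · refine Continuous.if ?_ continuous_const (Continuous.if ?_ continuous_const continuous_const)
    · intro a ha
      rw [Set.setOf_mem_eq, (isClopen_cyl A μ p).frontier_eq] at ha
      exact absurd ha (Set.notMem_empty a)
    · intro a ha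
      rw [Set.setOf_mem_eq, (isClopen_cyl A ν q).frontier_eq] at ha
      exact absurd ha (Set.notMem_empty a)
  · intro x
    by_cases hx : x ∈ Cyl A μ p
    · simp only [if_pos hx]
      apply Subtype.ext
      funext n
      rw [shift_iter_s18, shift_iter_s18, swapFun_val_of_mem₁ A hp hq hμ hν hlast hx, repl,
        if_neg (by omega : ¬ (n + q < q))]
      have : n + q - q + p = n + p := by omega
      rw [this]
    · by_cases hx' : x ∈ Cyl A ν q
      · simp only [if_neg hx, if_pos hx']
        apply Subtype.ext
        funext n
        rw [shift_iter_s18, shift_iter_s18, swapFun_val_of_mem₂ A hp hq hμ hν hlast hx' hx, repl,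
          if_neg (by omega : ¬ (n + p < p))]
        have : n + p - p + q = n + q := by omega
        rw [this]
      · simp only [if_neg hx, if_neg hx']
        rw [swapFun_of_notMem A hp hq hμ hν hlast hx hx']

/-- The swap homeomorphism, packaged with all its properties. -/
lemma swap_exists (hp : 0 < p) (hq : 0 < q)
    (hμ : ∀ k, k + 1 < p → A (μ k) (μ (k + 1)) = true)
    (hν : ∀ k, k + 1 < q → A (ν k) (ν (k + 1)) = true)
    (hlast : μ (p - 1) = ν (q - 1)) (hdisj : ∀ x ∈ Cyl A μ p, x ∉ Cyl A ν q) :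
    ∃ α : ShiftSpace A ≃ₜ ShiftSpace A, α ∈ fullGroup A ∧ α * α = 1 ∧
      (∀ x ∈ Cyl A μ p, α x ∈ Cyl A ν q) ∧
      (∀ x ∈ Cyl A ν q, α x ∈ Cyl A μ p) ∧
      (∀ x, x ∉ Cyl A μ p → x ∉ Cyl A ν q → α x = x) := by
  set f := swapFun A hp hq hμ hν hlast with hf
  have hinv := swapFun_invol A hp hq hμ hν hlast hdisj
  have hcont := continuous_swapFun A hp hq hμ hν hlast
  refine ⟨⟨⟨f, f, hinv, hinv⟩, hcont, hcont⟩, ?_, ?_, ?_, ?_, ?_⟩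
  · exact swapFun_fullGroup_key A hp hq hμ hν hlast
  · exact Homeomorph.ext fun x => hinv x
  · intro x hx; exact swapFun_mem₁ A hp hq hμ hν hlast hx
  · intro x hx
    by_cases hx' : x ∈ Cyl A μ p
    · exact absurd hx (hdisj x hx')
    · exact swapFun_mem₂ A hp hq hμ hν hlast hx hx'
  · intro x hx hx'; exact swapFun_of_notMem A hp hq hμ hν hlast hx hx'

end Dev3
theorem stmt18 {N : ℕ} (hN : 1 < N) (A : Fin N → Fin N → Bool)
    (hA : MatrixIrreducible A) (hI : ConditionI A)
    (U V : Set (ShiftSpace A)) (hU : IsClopen U) (hV : IsClopen V)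
    (hVU : (V \ U).Nonempty) :
    ∃ (n : ℕ) (Us : Fin n → Set (ShiftSpace A))
      (αs : Fin n → (ShiftSpace A ≃ₜ ShiftSpace A)),
      (∀ i, IsClopen (Us i)) ∧ (⋃ i, Us i) = U ∧
      (∀ i j, i ≠ j → Disjoint (Us i) (Us j)) ∧
      (∀ i, αs i ∈ fullGroup A) ∧
      (∀ i, (αs i) '' Us i ⊆ V \ U) ∧
      (∀ i j, i ≠ j → Disjoint ((αs i) '' Us i) ((αs j) '' Us j)) ∧
      (∀ i, αs i * αs i = 1) ∧
      (∀ i, ∀ x ∉ Us i ∪ (αs i) '' Us i, αs i x = x) := by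
  classical
  rcases Set.eq_empty_or_nonempty U with hUe | hUne
  · refine ⟨0, Fin.elim0, Fin.elim0, fun i => i.elim0, ?_, fun i => i.elim0,
      fun i => i.elim0, fun i => i.elim0, fun i j h => i.elim0, fun i => i.elim0,
      fun i => i.elim0⟩
    rw [hUe]
    exact Set.iUnion_of_empty _
  obtain ⟨mU, hmU1, hsat⟩ := clopen_saturated A hU
  set g : ShiftSpace A → (Fin mU → Fin N) := fun x k => x.1 k with hg
  set T : Finset (Fin mU → Fin N) := (Set.toFinite (g '' U)).toFinset with hT
  set n := T.card with hn
  set e : Fin n ≃ T := T.equivFin.symm with he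
  have hmemT : ∀ i : Fin n, (e i : Fin mU → Fin N) ∈ g '' U := fun i => by
    exact (Set.Finite.mem_toFinset _).mp (e i).2
  have hrep : ∀ i : Fin n, ∃ x, x ∈ U ∧ g x = (e i : Fin mU → Fin N) := by
    intro i
    obtain ⟨x, hx, hgx⟩ := hmemT i
    exact ⟨x, hx, hgx⟩
  choose xrep hrepU hrepg using hrep
  set Us : Fin n → Set (ShiftSpace A) := fun i => Cyl A (xrep i).1 mU with hUs
  have hUssub : ∀ i, Us i ⊆ U := fun i y hy => hsat (xrep i) (hrepU i) y hy
  have hUsclopen : ∀ i, IsClopen (Us i) := fun i => isClopen_cyl A (xrep i).1 mU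
  have hUsunion : (⋃ i, Us i) = U := by
    apply Set.Subset.antisymm
    · exact Set.iUnion_subset hUssub
    · intro x hx
      have hgx : g x ∈ T := (Set.Finite.mem_toFinset _).mpr ⟨x, hx, rfl⟩
      set i := e.symm ⟨g x, hgx⟩ with hi
      have hei : (e i : Fin mU → Fin N) = g x := by
        rw [hi, Equiv.apply_symm_apply]
      refine Set.mem_iUnion.mpr ⟨i, fun k hk => ?_⟩
      have := congrFun ((hrepg i).trans hei) ⟨k, hk⟩
      exact this.symm
  have hUsdisj : ∀ i j, i ≠ j → Disjoint (Us i) (Us j) := by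
    intro i j hij
    rw [Set.disjoint_left]
    intro x hxi hxj
    apply hij
    have hgij : g (xrep i) = g (xrep j) := by
      funext k
      have h1 : x.1 k = (xrep i).1 k := hxi k k.2
      have h2 : x.1 k = (xrep j).1 k := hxj k k.2
      simp only [hg]
      rw [← h1, ← h2]
    have : (e i : Fin mU → Fin N) = (e j : Fin mU → Fin N) := by
      rw [← hrepg i, ← hrepg j, hgij]
    have : e i = e j := Subtype.ext this
    exact e.injective this
  -- disjoint target cylinders inside V \ U
  obtain ⟨m', hm'1, z, hzsub, hzdisj⟩ :=
    exists_disjoint_cyls A hI n (V \ U) (hV.diff hU) hVU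
  have hzdisjcyl : ∀ i j, i ≠ j → Disjoint (Cyl A (z i).1 m') (Cyl A (z j).1 m') := by
    intro i j hij
    rw [Set.disjoint_left]
    intro x hxi hxj
    obtain ⟨k, hk, hne⟩ := hzdisj i j hij
    exact hne ((hxi k hk).symm.trans (hxj k hk))
  -- for each i, build the swap
  have hmain : ∀ i : Fin n, ∃ α : ShiftSpace A ≃ₜ ShiftSpace A,
      α ∈ fullGroup A ∧ α * α = 1 ∧
      (∀ x ∈ Us i, α x ∈ Cyl A (z i).1 m') ∧
      (∀ x, x ∉ Us i ∪ α '' Us i → α x = x) := by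
    intro i
    obtain ⟨ℓ, hℓ, pw, hpw0, hpwℓ, hpwE⟩ := hA ((z i).1 (m' - 1)) ((xrep i).1 (mU - 1))
    set νw : ℕ → Fin N := fun k => if k < m' then (z i).1 k else pw (k - (m' - 1)) with hνw
    have hνadm : ∀ k, k + 1 < m' + ℓ → A (νw k) (νw (k + 1)) = true := by
      intro k hk
      rcases lt_trichotomy (k + 1) m' with h1 | h2 | h3
      · have hkm : k < m' := by omega
        simp only [hνw, if_pos hkm, if_pos h1]
        exact (z i).2 k
      · have hkm : k < m' := by omega
        have hk1 : ¬ (k + 1 < m') := by omega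
        simp only [hνw, if_pos hkm, if_neg hk1]
        have h01 : k + 1 - (m' - 1) = 1 := by omega
        have h00 : k = m' - 1 := by omega
        rw [h01, h00, ← hpw0]
        have := hpwE 0 hℓ
        exact this
      · have hkm : ¬ (k < m') := by omega
        have hk1 : ¬ (k + 1 < m') := by omega
        simp only [hνw, if_neg hkm, if_neg hk1]
        have hidx : k + 1 - (m' - 1) = (k - (m' - 1)) + 1 := by omega
        rw [hidx]
        exact hpwE (k - (m' - 1)) (by omega)
    have hlast : (xrep i).1 (mU - 1) = νw (m' + ℓ - 1) := by
      have hge : ¬ (m' + ℓ - 1 < m') := by omega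
      simp only [hνw, if_neg hge]
      have : m' + ℓ - 1 - (m' - 1) = ℓ := by omega
      rw [this, hpwℓ]
    have hsubz : Cyl A νw (m' + ℓ) ⊆ Cyl A (z i).1 m' := by
      intro y hy k hk
      have h2 : νw k = (z i).1 k := if_pos hk
      have := hy k (by omega)
      rwa [h2] at this
    have hdisj : ∀ x ∈ Cyl A (xrep i).1 mU, x ∉ Cyl A νw (m' + ℓ) := by
      intro x hx hx'
      have hxU : x ∈ U := hsat (xrep i) (hrepU i) x hx
      have hxVU : x ∈ V \ U := hzsub i (hsubz hx')
      exact hxVU.2 hxU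
    obtain ⟨α, hαfg, hαinv, hα1, hα2, hα3⟩ :=
      swap_exists A (μ := (xrep i).1) (ν := νw) (p := mU) (q := m' + ℓ)
        hmU1 (by omega) (fun k hk => (xrep i).2 k) hνadm hlast hdisj
    refine ⟨α, hαfg, hαinv, fun x hx => hsubz (hα1 x hx), ?_⟩
    intro x hx
    by_cases hxν : x ∈ Cyl A νw (m' + ℓ)
    · exfalso
      apply hx
      right
      refine ⟨α x, hα2 x hxν, ?_⟩
      have := congrArg (fun β => β x) hαinv
      simpa using this
    · exact hα3 x (fun h => hx (Or.inl h)) hxν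
  choose αs hαfg hαinv hαmaps hαid using hmain
  refine ⟨n, Us, αs, hUsclopen, hUsunion, hUsdisj, hαfg, ?_, ?_, hαinv, hαid⟩
  · intro i y hy
    obtain ⟨x, hx, rfl⟩ := hy
    exact hzsub i (hαmaps i x hx)
  · intro i j hij
    refine Set.disjoint_of_subset ?_ ?_ (hzdisjcyl i j hij)
    · rintro y ⟨x, hx, rfl⟩; exact hαmaps i x hx
    · rintro y ⟨x, hx, rfl⟩; exact hαmaps j x hx
end

section
/- Let (H,K) be a strong commuting pair of subgroups of Γ_A and suppose there is a nonempty clopen set U ⊆ P_H such that γ(U) = U for all γ in the subgroup generated by H and K. Then U = P_H. -/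
open Set

/-- A strong commuting pair of subgroups of `Γ_A`: conditions (D1) and (D2). -/
def IsStrongCommutingPair {N : ℕ} (A : Fin N → Fin N → Bool)
    (H K : Subgroup (ShiftSpace A ≃ₜ ShiftSpace A)) : Prop :=
  H ≤ fullGroup A ∧ K ≤ fullGroup A ∧
  commutant A ↑H = ↑K ∧ commutant A ↑K = ↑H ∧ H ⊓ K = ⊥ ∧
  (∀ M : Subgroup (ShiftSpace A ≃ₜ ShiftSpace A), M ≤ H → M ≠ ⊥ →
    (∀ h ∈ H, ∀ n ∈ M, h * n * h⁻¹ ∈ M) → commutant A ↑M = ↑K) ∧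
  (∀ M : Subgroup (ShiftSpace A ≃ₜ ShiftSpace A), M ≤ K → M ≠ ⊥ →
    (∀ h ∈ K, ∀ n ∈ M, h * n * h⁻¹ ∈ M) → commutant A ↑M = ↑H)

open Classical in
/-- The homeomorphism equal to `γ` off `V` and the identity on `V`. -/
noncomputable def restrictOut {α : Type*} [TopologicalSpace α] (V : Set α) (hV : IsClopen V)
    (γ : α ≃ₜ α) (hγ : ∀ x, γ x ∈ V ↔ x ∈ V) : α ≃ₜ α where
  toFun x := if x ∈ V then x else γ x
  invFun x := if x ∈ V then x else γ.symm x
  left_inv x := by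
    by_cases hx : x ∈ V
    · simp [hx]
    · have h1 : γ x ∉ V := fun h => hx ((hγ x).mp h)
      simp [hx, h1]
  right_inv x := by
    by_cases hx : x ∈ V
    · simp [hx]
    · have h1 : γ.symm x ∉ V := fun h => hx (by
        rw [← γ.apply_symm_apply x]; exact (hγ _).mpr h)
      simp [hx, h1]
  continuous_toFun := by
    refine Continuous.if ?_ continuous_id γ.continuous
    intro a ha
    rw [show {a | a ∈ V} = V from rfl, hV.frontier_eq] at ha
    exact absurd ha (Set.notMem_empty a)
  continuous_invFun := by
    refine Continuous.if ?_ continuous_id γ.symm.continuous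
    intro a ha
    rw [show {a | a ∈ V} = V from rfl, hV.frontier_eq] at ha
    exact absurd ha (Set.notMem_empty a)

open Classical in
@[simp] theorem restrictOut_apply {α : Type*} [TopologicalSpace α] (V : Set α)
    (hV : IsClopen V) (γ : α ≃ₜ α) (hγ : ∀ x, γ x ∈ V ↔ x ∈ V) (x : α) :
    restrictOut V hV γ hγ x = if x ∈ V then x else γ x := rfl

theorem restrictOut_mem_fullGroup {N : ℕ} (A : Fin N → Fin N → Bool)
    (V : Set (ShiftSpace A)) (hV : IsClopen V) (γ : ShiftSpace A ≃ₜ ShiftSpace A)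
    (hγ : ∀ x, γ x ∈ V ↔ x ∈ V) (hγΓ : γ ∈ fullGroup A) :
    restrictOut V hV γ hγ ∈ fullGroup A := by
  classical
  obtain ⟨k, l, hk, hl, hkl⟩ := hγΓ
  have hfr : ∀ a ∈ frontier {a : ShiftSpace A | a ∈ V}, True := fun _ _ => trivial
  refine ⟨fun x => if x ∈ V then 0 else k x, fun x => if x ∈ V then 0 else l x, ?_, ?_, ?_⟩
  · refine Continuous.if ?_ continuous_const hk
    intro a ha
    rw [show {a | a ∈ V} = V from rfl, hV.frontier_eq] at ha
    exact absurd ha (Set.notMem_empty a)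
  · refine Continuous.if ?_ continuous_const hl
    intro a ha
    rw [show {a | a ∈ V} = V from rfl, hV.frontier_eq] at ha
    exact absurd ha (Set.notMem_empty a)
  · intro x
    by_cases hx : x ∈ V
    · simp [hx]
    · simpa [hx] using hkl x

theorem stmt19 {N : ℕ} (hN : 1 < N) (A : Fin N → Fin N → Bool)
    (hA : MatrixIrreducible A) (hI : ConditionI A)
    (H K : Subgroup (ShiftSpace A ≃ₜ ShiftSpace A))
    (hHK : IsStrongCommutingPair A H K)
    (U : Set (ShiftSpace A)) (hU : IsClopen U) (hUne : U.Nonempty)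
    (hUP : U ⊆ suppSet (H : Set (ShiftSpace A ≃ₜ ShiftSpace A)))
    (hinv : ∀ γ ∈ Subgroup.closure ((H : Set (ShiftSpace A ≃ₜ ShiftSpace A)) ∪ ↑K),
      γ '' U = U) :
    U = suppSet (H : Set (ShiftSpace A ≃ₜ ShiftSpace A)) := by
  classical
  obtain ⟨hHΓ, hKΓ, hcHK, hcKH, hHKbot, hD2H, _⟩ := hHK
  -- invariance of U under H and K, as an iff
  have himg : ∀ γ : ShiftSpace A ≃ₜ ShiftSpace A, γ '' U = U → ∀ z, γ z ∈ U ↔ z ∈ U := by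
    intro γ hγ z
    constructor
    · intro hz
      rw [← hγ] at hz
      obtain ⟨w, hw, hwz⟩ := hz
      rwa [← γ.injective hwz]
    · intro hz
      rw [← hγ]
      exact ⟨z, hz, rfl⟩
  have hHU : ∀ γ ∈ H, ∀ z, γ z ∈ U ↔ z ∈ U := fun γ hγ =>
    himg γ (hinv γ (Subgroup.subset_closure (Set.mem_union_left _ hγ)))
  have hKU : ∀ γ ∈ K, ∀ z, γ z ∈ U ↔ z ∈ U := fun γ hγ =>
    himg γ (hinv γ (Subgroup.subset_closure (Set.mem_union_right _ hγ)))
  -- elements of H and K commute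
  have hcomm : ∀ h ∈ H, ∀ k ∈ K, h * k = k * h := by
    intro h hh k hk
    have hk' : k ∈ commutant A (H : Set (ShiftSpace A ≃ₜ ShiftSpace A)) := by
      rw [hcHK]; exact hk
    exact (hk'.2 h hh).symm
  -- restricting an element of H outside a clopen K-invariant set stays in H
  have keyH : ∀ (V : Set (ShiftSpace A)) (hV : IsClopen V)
      (hVK : ∀ k ∈ K, ∀ z, k z ∈ V ↔ z ∈ V)
      (γ : ShiftSpace A ≃ₜ ShiftSpace A) (hγH : γ ∈ H) (hγV : ∀ z, γ z ∈ V ↔ z ∈ V),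
      restrictOut V hV γ hγV ∈ H := by
    intro V hV hVK γ hγH hγV
    have : restrictOut V hV γ hγV ∈ commutant A (K : Set (ShiftSpace A ≃ₜ ShiftSpace A)) := by
      refine ⟨restrictOut_mem_fullGroup A V hV γ hγV (hHΓ hγH), ?_⟩
      intro k hk
      refine Homeomorph.ext fun x => ?_
      have hcom : γ (k x) = k (γ x) := by
        have := hcomm γ hγH k hk
        calc γ (k x) = (γ * k) x := rfl
          _ = (k * γ) x := by rw [this]
          _ = k (γ x) := rfl
      show restrictOut V hV γ hγV (k x) = k (restrictOut V hV γ hγV x)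
      by_cases hx : x ∈ V
      · have hkx : k x ∈ V := (hVK k hk x).mpr hx
        simp [hx, hkx]
      · have hkx : k x ∉ V := fun h => hx ((hVK k hk x).mp h)
        simp [hx, hkx, hcom]
    rw [hcKH] at this
    exact this
  -- main inclusion : suppSet H ⊆ U
  refine Set.Subset.antisymm hUP ?_
  refine closure_minimal ?_ hU.isClosed
  intro x hx
  rw [Set.mem_iUnion₂] at hx
  obtain ⟨η, hηH, hxη⟩ := hx
  by_contra hxU
  -- get a point y ∉ U moved by η
  have hxcl : x ∈ closure {w | η w ≠ w} := interior_subset hxη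
  obtain ⟨y, hyO, hy⟩ := _root_.mem_closure_iff.mp hxcl Uᶜ hU.isClosed.isOpen_compl hxU
  have hyU : y ∉ U := hyO
  -- the restriction of η off U
  have hηU := hHU η hηH
  set η₂ := restrictOut U hU η hηU with hη₂def
  have hη₂H : η₂ ∈ H := keyH U hU hKU η hηH hηU
  -- the normal subgroup M of H of elements fixing U pointwise
  set M : Subgroup (ShiftSpace A ≃ₜ ShiftSpace A) :=
    { carrier := {g | g ∈ H ∧ ∀ z ∈ U, g z = z}
      one_mem' := ⟨H.one_mem, fun _ _ => rfl⟩
      mul_mem' := by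
        rintro a b ⟨haH, ha⟩ ⟨hbH, hb⟩
        refine ⟨H.mul_mem haH hbH, fun z hz => ?_⟩
        show a (b z) = z
        rw [hb z hz, ha z hz]
      inv_mem' := by
        rintro a ⟨haH, ha⟩
        refine ⟨H.inv_mem haH, fun z hz => ?_⟩
        show a.symm z = z
        conv_lhs => rw [← ha z hz]
        exact a.symm_apply_apply z } with hMdef
  have hMH : M ≤ H := fun g hg => hg.1
  have hη₂M : η₂ ∈ M := by
    refine ⟨hη₂H, fun z hz => ?_⟩
    rw [hη₂def, restrictOut_apply, if_pos hz]
  have hη₂ne : η₂ ≠ 1 := by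
    intro h1
    have : η₂ y = y := by rw [h1]; rfl
    rw [hη₂def, restrictOut_apply, if_neg hyU] at this
    exact hy this
  have hMne : M ≠ ⊥ := by
    intro hbot
    rw [hbot, Subgroup.mem_bot] at hη₂M
    exact hη₂ne hη₂M
  have hMnorm : ∀ h ∈ H, ∀ n ∈ M, h * n * h⁻¹ ∈ M := by
    intro h hh n hn
    refine ⟨H.mul_mem (H.mul_mem hh (hMH hn)) (H.inv_mem hh), fun z hz => ?_⟩
    show h (n (h.symm z)) = z
    have hsz : h.symm z ∈ U := by
      have := hHU h⁻¹ (H.inv_mem hh) z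
      rw [homeo_inv_apply] at this
      exact this.mpr hz
    rw [hn.2 _ hsz, h.apply_symm_apply]
  have hcMK : commutant A (M : Set (ShiftSpace A ≃ₜ ShiftSpace A))
      = (K : Set (ShiftSpace A ≃ₜ ShiftSpace A)) := hD2H M hMH hMne hMnorm
  -- every element of H fixes U pointwise
  have hfix : ∀ h ∈ H, ∀ z ∈ U, h z = z := by
    intro h hh
    have hhUc : ∀ z, h z ∈ Uᶜ ↔ z ∈ Uᶜ := by
      intro z
      simp only [Set.mem_compl_iff]
      exact not_congr (hHU h hh z)
    have hKUc : ∀ k ∈ K, ∀ z, k z ∈ Uᶜ ↔ z ∈ Uᶜ := by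
      intro k hk z
      simp only [Set.mem_compl_iff]
      exact not_congr (hKU k hk z)
    set h₁ := restrictOut Uᶜ hU.compl h hhUc with hh₁def
    have hh₁H : h₁ ∈ H := keyH Uᶜ hU.compl hKUc h hh hhUc
    have hh₁K : h₁ ∈ commutant A (M : Set (ShiftSpace A ≃ₜ ShiftSpace A)) := by
      refine ⟨hHΓ hh₁H, ?_⟩
      intro n hn
      refine Homeomorph.ext fun z => ?_
      show h₁ (n z) = n (h₁ z)
      by_cases hz : z ∈ U
      · have h1 : n z = z := hn.2 z hz
        have h2 : h₁ z = h z := by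
          rw [hh₁def, restrictOut_apply, if_neg (by simpa using hz)]
        have h3 : h z ∈ U := (hHU h hh z).mpr hz
        rw [h1, h2, hn.2 _ h3]
      · have hnz : n z ∉ U := fun hmem => hz ((hHU n (hMH hn) z).mp hmem)
        have h1 : h₁ (n z) = n z := by
          rw [hh₁def, restrictOut_apply, if_pos (by simpa using hnz)]
        have h2 : h₁ z = z := by
          rw [hh₁def, restrictOut_apply, if_pos (by simpa using hz)]
        rw [h1, h2]
    rw [hcMK] at hh₁K
    have : h₁ ∈ H ⊓ K := Subgroup.mem_inf.mpr ⟨hh₁H, hh₁K⟩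
    rw [hHKbot, Subgroup.mem_bot] at this
    intro z hz
    have hz1 : h₁ z = z := by rw [this]; rfl
    rw [hh₁def, restrictOut_apply, if_neg (by simpa using hz)] at hz1
    exact hz1
  -- conclude : U ⊆ suppSet H ⊆ Uᶜ, contradiction with U nonempty
  obtain ⟨z, hz⟩ := hUne
  have hzP := hUP hz
  have hsub : suppSet (H : Set (ShiftSpace A ≃ₜ ShiftSpace A)) ⊆ Uᶜ := by
    refine closure_minimal ?_ hU.isOpen.isClosed_compl
    intro w hw
    rw [Set.mem_iUnion₂] at hw
    obtain ⟨g, hgH, hwg⟩ := hw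
    have h1 : {v | g v ≠ v} ⊆ Uᶜ := by
      intro v hv hvU
      exact hv (hfix g hgH v hvU)
    have h2 : suppHomeo g ⊆ Uᶜ :=
      closure_minimal h1 hU.isOpen.isClosed_compl
    exact h2 (interior_subset hwg)
  exact (hsub hzP) hz
end
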